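/- arXiv:1609.07575 — 9 statements merged into one kernel-verified Lean document; each statement's English description precedes it below -/
import Mathlib

section
/- Let k ≤ n be positive integers, let α_1, …, α_k ∈ ℚ be distinct rational numbers, and let β_1, …, β_n ∈ ℚ be rational numbers such that {β_1, …, β_n} = {α_1, …, α_k} as sets. Then for every integer r with n−k+1 ≤ r ≤ n, one has ∑_{j=0}^{r} (−1)^j e_{r−j}(β_1, …, β_n) h_j(α_1, …, α_k) = 0. -/
/-!
Write `E_s(t) = ∏_{a ∈ s} (1 + a t)`, whose `t^d`-coefficient is `e_d(s)`. Since
`1 / (1 + a t) = ∑_j (-a)^j t^j`, the series `∏_i 1 / (1 + α_i t)` has `t^j`-coefficient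
`h_j(-α) = (-1)^j h_j(α)`, so the sum in question is the `t^r`-coefficient of
`E_β(t) / E_α(t)`. Because the `α_i` are distinct and all occur among the `β_i`, the multiset
of the `α_i` is contained in that of the `β_i`, and the quotient is the polynomial
`E_{β - α}(t)` of degree `n - k < r`.
-/

/-- `eSym n d β` is the elementary symmetric polynomial `e_d(β_1, …, β_n)`
evaluated at the rationals `β_1, …, β_n`, with `e_0 = 1`. -/
def eSym (n d : ℕ) (β : Fin n → ℚ) : ℚ :=
  ∑ T ∈ Finset.powersetCard d (Finset.univ : Finset (Fin n)), ∏ i ∈ T, β i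

/-- `hSym k d α` is the complete homogeneous symmetric polynomial `h_d(α_1, …, α_k)`
evaluated at the rationals `α_1, …, α_k`, with `h_0 = 1`. -/
def hSym (k d : ℕ) (α : Fin k → ℚ) : ℚ :=
  ∑ m : Sym (Fin k) d, (m.1.map α).prod

open PowerSeries

namespace Multiset

theorem map_univ_val_le_of_range_subset {ι κ M : Type*} [Fintype ι] [Fintype κ] {α : ι → M}
    {β : κ → M} (hα : Function.Injective α) (hαβ : Set.range α ⊆ Set.range β) :
    Finset.univ.val.map α ≤ Finset.univ.val.map β := by
  refine (le_iff_subset (Finset.univ.nodup.map hα)).2 fun a ha => ?_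
  obtain ⟨i, -, rfl⟩ := mem_map.1 ha
  obtain ⟨j, hj⟩ := hαβ ⟨i, rfl⟩
  exact hj ▸ mem_map_of_mem β (Finset.mem_univ_val j)

variable {R : Type*} [CommSemiring R]

theorem esymm_cons_succ (a : R) (s : Multiset R) (d : ℕ) :
    (a ::ₘ s).esymm (d + 1) = s.esymm (d + 1) + a * s.esymm d := by
  simp [esymm, powersetCard_cons, sum_map_mul_left]

theorem esymm_eq_zero_of_card_lt {s : Multiset R} {d : ℕ} (h : card s < d) : s.esymm d = 0 := by
  simp [esymm, powersetCard_eq_empty _ h]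

end Multiset

namespace PowerSeries

theorem coeff_prod_one_add_C_mul_X {R : Type*} [CommSemiring R] (s : Multiset R) (d : ℕ) :
    coeff d (s.map fun a => 1 + C a * X).prod = s.esymm d := by
  induction s using Multiset.induction_on generalizing d with
  | empty =>
    cases d with
    | zero => simp [Multiset.esymm]
    | succ d =>
      simp [coeff_one, Multiset.esymm_eq_zero_of_card_lt (s := (0 : Multiset R)) d.succ_pos]
  | cons a s ih =>
    cases d with
    | zero => simpa [Multiset.esymm] using ih 0
    | succ d =>
      rw [Multiset.map_cons, Multiset.prod_cons, add_mul, one_mul, map_add, mul_assoc,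
        coeff_C_mul, coeff_succ_X_mul, ih, ih, Multiset.esymm_cons_succ]

variable {R : Type*} [CommRing R]

theorem one_add_C_mul_X_mul_mk_neg_pow (a : R) :
    (1 + C a * X) * mk (fun t => (-a) ^ t) = 1 := by
  ext (_ | n)
  · simp
  · rw [add_mul, one_mul, map_add, mul_assoc, coeff_C_mul, coeff_succ_X_mul]
    simp [pow_succ, mul_comm]

theorem prod_one_add_C_mul_X_mul_eq_of_le [DecidableEq R] {s t : Multiset R} (hst : s ≤ t)
    {G : R⟦X⟧} (hG : (s.map fun a => 1 + C a * X).prod * G = 1) :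
    (t.map fun a => 1 + C a * X).prod * G = ((t - s).map fun a => 1 + C a * X).prod := by
  rw [← add_tsub_cancel_of_le hst, Multiset.map_add, Multiset.prod_add, add_tsub_cancel_left,
    mul_right_comm, hG, one_mul]

end PowerSeries

theorem eSym_eq_esymm {n : ℕ} (d : ℕ) (β : Fin n → ℚ) :
    eSym n d β = (Finset.univ.val.map β).esymm d := by
  rw [eSym, Finset.esymm_map_val]

theorem hSym_neg {k : ℕ} (d : ℕ) (α : Fin k → ℚ) : hSym k d (-α) = (-1) ^ d * hSym k d α := by
  simp only [hSym, Finset.mul_sum]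
  refine Finset.sum_congr rfl fun m _ => ?_
  simpa [m.2] using Multiset.prod_map_neg (m.1.map α)

theorem hSym_eq_coeff_prod_mk_pow {k : ℕ} (d : ℕ) (α : Fin k → ℚ) :
    hSym k d α = coeff d (∏ i, mk fun t => α i ^ t) := by
  classical
  rw [coeff_prod]
  simp only [coeff_mk]
  refine Finset.sum_bij' (fun m _ => Multiset.toFinsupp m.1)
    (fun f hf => ⟨Finsupp.toMultiset f, ?_⟩) ?_ ?_ ?_ ?_ ?_
  · simpa [Finset.mem_finsuppAntidiag, Finsupp.card_toMultiset, Finsupp.sum_fintype] using hf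
  · intro m _
    refine Finset.mem_finsuppAntidiag.2 ⟨?_, Finset.subset_univ _⟩
    change ∑ i, m.1.toFinsupp i = d
    simp [Multiset.toFinsupp_apply]
  · exact fun _ _ => Finset.mem_univ _
  · exact fun m _ => Subtype.ext (by simp)
  · exact fun f _ => by simp
  · intro m _
    rw [Finset.prod_multiset_map_count]
    refine Finset.prod_subset (Finset.subset_univ _) fun i _ hi => ?_
    simp_all

theorem stmt0_general (n k : ℕ)
    (α : Fin k → ℚ) (hα : Function.Injective α)
    (β : Fin n → ℚ) (hβ : Set.range β = Set.range α)
    (r : ℕ) (hr1 : n - k + 1 ≤ r) :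
    ∑ j ∈ Finset.range (r + 1), (-1 : ℚ) ^ j * eSym n (r - j) β * hSym k j α = 0 := by
  set A := Finset.univ.val.map α
  set B := Finset.univ.val.map β
  have hAB : A ≤ B := Multiset.map_univ_val_le_of_range_subset hα hβ.ge
  set G : ℚ⟦X⟧ := ∏ i, mk fun t => (-α) i ^ t
  have hG : (A.map fun a => 1 + C a * X).prod * G = 1 := by
    rw [Multiset.map_map, Finset.prod_map_val, ← Finset.prod_mul_distrib]
    exact Finset.prod_eq_one fun i _ => one_add_C_mul_X_mul_mk_neg_pow (α i)
  have hcard : Multiset.card (B - A) < r := by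
    simp only [Multiset.card_sub hAB, A, B, Multiset.card_map, Finset.card_val,
      Finset.card_univ, Fintype.card_fin]
    omega
  have hcoeff := congrArg (coeff r) (prod_one_add_C_mul_X_mul_eq_of_le hAB hG)
  rw [coeff_prod_one_add_C_mul_X, Multiset.esymm_eq_zero_of_card_lt hcard, mul_comm, coeff_mul,
    Finset.Nat.sum_antidiagonal_eq_sum_range_succ (fun i j => coeff i G * coeff j _)] at hcoeff
  rw [← hcoeff]
  refine Finset.sum_congr rfl fun j _ => ?_
  rw [coeff_prod_one_add_C_mul_X, ← hSym_eq_coeff_prod_mk_pow, hSym_neg, eSym_eq_esymm]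
  ring

theorem stmt0 (n k : ℕ) (hk : 1 ≤ k) (hkn : k ≤ n)
    (α : Fin k → ℚ) (hα : Function.Injective α)
    (β : Fin n → ℚ) (hβ : Set.range β = Set.range α)
    (r : ℕ) (hr1 : n - k + 1 ≤ r) (hr2 : r ≤ n) :
    ∑ j ∈ Finset.range (r + 1), (-1 : ℚ) ^ j * eSym n (r - j) β * hSym k j α = 0 :=
  stmt0_general n k α hα β hβ r hr1
end

section
/- Let m ∈ ℚ[x_1, …, x_n] be a monomial and let S, T ⊆ {1, …, n}. If x(S) divides m and x(T) divides m, then x(S ∪ T) divides m. -/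
/-- The exponent of `x_i` (with `i : Fin n` representing the 1-based index `i+1`)
in the skip monomial `x(S)`: it is `i − |S ∩ {1, …, i−1}|` (1-based) for `i ∈ S`
and `0` otherwise. -/
def skipExp {n : ℕ} (S : Finset (Fin n)) (i : Fin n) : ℕ :=
  if i ∈ S then (i : ℕ) + 1 - (S.filter (fun j => j < i)).card else 0

/-- The skip monomial `x(S)` divides the monomial with exponent vector `a`,
i.e. the exponent vector of `x(S)` is componentwise at most `a`. -/
def skipDvd {n : ℕ} (S : Finset (Fin n)) (a : Fin n → ℕ) : Prop :=
  ∀ i : Fin n, skipExp S i ≤ a i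

theorem stmt1 {n : ℕ} (a : Fin n → ℕ) (S T : Finset (Fin n))
    (hS : skipDvd S a) (hT : skipDvd T a) : skipDvd (S ∪ T) a := by
  intro i
  unfold skipExp
  by_cases h : i ∈ S ∪ T
  · rw [if_pos h]
    rcases Finset.mem_union.mp h with hi | hi
    · calc (i : ℕ) + 1 - ((S ∪ T).filter (fun j => j < i)).card
          ≤ (i : ℕ) + 1 - (S.filter (fun j => j < i)).card :=
            Nat.sub_le_sub_left
              (Finset.card_le_card (Finset.filter_subset_filter _ Finset.subset_union_left)) _
        _ ≤ a i := by have := hS i; rwa [skipExp, if_pos hi] at this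
    · calc (i : ℕ) + 1 - ((S ∪ T).filter (fun j => j < i)).card
          ≤ (i : ℕ) + 1 - (T.filter (fun j => j < i)).card :=
            Nat.sub_le_sub_left
              (Finset.card_le_card (Finset.filter_subset_filter _ Finset.subset_union_right)) _
        _ ≤ a i := by have := hT i; rwa [skipExp, if_pos hi] at this
  · rw [if_neg h]; exact Nat.zero_le _
end

section
/- Let m ∈ ℚ[x_1, …, x_n] be a monomial and let r be a positive integer such that x(S) divides m for some S ⊆ {1, …, n} with |S| = r, but there exists no T ⊆ {1, …, n} with |T| > r such that x(T) divides m. Then there exists a unique S ⊆ {1, …, n} with |S| = r such that x(S) divides m. -/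
theorem stmt2 {n : ℕ} (a : Fin n → ℕ) (r : ℕ) (hr : 0 < r)
    (hex : ∃ S : Finset (Fin n), S.card = r ∧ skipDvd S a)
    (hmax : ∀ T : Finset (Fin n), r < T.card → ¬ skipDvd T a) :
    ∃! S : Finset (Fin n), S.card = r ∧ skipDvd S a := by
  have hunion : ∀ S T : Finset (Fin n), skipDvd S a → skipDvd T a →
      skipDvd (S ∪ T) a := by
    intro S T hS hT i
    unfold skipExp
    by_cases hiS : i ∈ S
    · have h1 := hS i
      unfold skipExp at h1
      rw [if_pos hiS] at h1
      rw [if_pos (Finset.mem_union_left T hiS)]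
      refine le_trans (Nat.sub_le_sub_left ?_ _) h1
      exact Finset.card_le_card
        (Finset.filter_subset_filter _ Finset.subset_union_left)
    · by_cases hiT : i ∈ T
      · have h1 := hT i
        unfold skipExp at h1
        rw [if_pos hiT] at h1
        rw [if_pos (Finset.mem_union_right S hiT)]
        refine le_trans (Nat.sub_le_sub_left ?_ _) h1
        exact Finset.card_le_card
          (Finset.filter_subset_filter _ Finset.subset_union_right)
      · rw [if_neg (by simp [hiS, hiT])]
        exact Nat.zero_le _
  obtain ⟨S, hScard, hSdvd⟩ := hex
  refine ⟨S, ⟨hScard, hSdvd⟩, ?_⟩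
  intro T ⟨hTcard, hTdvd⟩
  by_contra hne
  have hsub : S ⊆ S ∪ T := Finset.subset_union_left
  have hcard : r < (S ∪ T).card := by
    rcases lt_or_eq_of_le (Finset.card_le_card hsub) with h | h
    · omega
    · exfalso
      have hEq : S = S ∪ T := Finset.eq_of_subset_of_card_le hsub (le_of_eq h.symm)
      have hTS : T ⊆ S := hEq ▸ Finset.subset_union_right
      exact hne (Finset.eq_of_subset_of_card_le hTS (by omega))
  exact hmax _ hcard (hunion S T hSdvd hTdvd)
end

section
/- Let k ≤ n be positive integers and let m ∈ M_{n,k} be an (n,k)-nonskip monomial. Then there exists a unique set S ⊆ {1, …, n} with |S| = n−k such that (1) x(S) divides m(S)·m, and (2) x(U) does not divide m(S)·m for every U ⊆ {1, …, n} with |U| = n−k+1, where m(S) = ∏_{i ∈ S} x_i. -/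
/-- A monomial with exponent vector `a` is `(n,k)`-nonskip: no `x_i^k` divides it, and
no skip monomial `x(S)` with `|S| = n - k + 1` divides it. -/
def IsNonskip (n k : ℕ) (a : Fin n → ℕ) : Prop :=
  (∀ i : Fin n, ¬ (k ≤ a i)) ∧
  ∀ S : Finset (Fin n), S.card = n - k + 1 → ¬ skipDvd S a

namespace Stmt3Aux

/-- number of elements of `S` with value `< m` -/
def cntF {n : ℕ} (S : Finset (Fin n)) (m : ℕ) : ℕ :=
  (S.filter (fun (j : Fin n) => (j : ℕ) < m)).card

lemma sigma_eq {n : ℕ} (S : Finset (Fin n)) (i : Fin n) :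
    (S.filter (fun j => j < i)).card = cntF S (i : ℕ) := by
  unfold cntF
  congr 1

lemma cntF_zero {n : ℕ} (S : Finset (Fin n)) : cntF S 0 = 0 := by
  simp [cntF]

lemma cntF_ge {n : ℕ} (S : Finset (Fin n)) {m : ℕ} (h : n ≤ m) : cntF S m = S.card := by
  unfold cntF
  rw [Finset.filter_true_of_mem]
  intro j _
  exact lt_of_lt_of_le j.2 h

lemma cntF_succ {n : ℕ} (S : Finset (Fin n)) (m : ℕ) :
    cntF S (m + 1) = cntF S m +
      (if h : m < n then (if (⟨m, h⟩ : Fin n) ∈ S then 1 else 0) else 0) := by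
  unfold cntF
  by_cases h : m < n
  · rw [dif_pos h]
    by_cases hm : (⟨m, h⟩ : Fin n) ∈ S
    · rw [if_pos hm]
      have he : S.filter (fun (j : Fin n) => (j : ℕ) < m + 1)
          = insert ⟨m, h⟩ (S.filter (fun (j : Fin n) => (j : ℕ) < m)) := by
        ext j
        simp only [Finset.mem_filter, Finset.mem_insert]
        constructor
        · rintro ⟨hj, hlt⟩
          rcases Nat.lt_succ_iff_lt_or_eq.mp hlt with h' | h'
          · exact Or.inr ⟨hj, h'⟩
          · exact Or.inl (Fin.ext h')
        · rintro (rfl | ⟨hj, hlt⟩)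
          · exact ⟨hm, Nat.lt_succ_self m⟩
          · exact ⟨hj, Nat.lt_succ_of_lt hlt⟩
      rw [he, Finset.card_insert_of_notMem (by simp)]
    · rw [if_neg hm]
      have he : S.filter (fun (j : Fin n) => (j : ℕ) < m + 1) = S.filter (fun (j : Fin n) => (j : ℕ) < m) := by
        ext j
        simp only [Finset.mem_filter]
        constructor
        · rintro ⟨hj, hlt⟩
          refine ⟨hj, ?_⟩
          rcases Nat.lt_succ_iff_lt_or_eq.mp hlt with h' | h'
          · exact h'
          · exact absurd hj (by rw [show j = (⟨m, h⟩ : Fin n) from Fin.ext h']; exact hm)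
        · rintro ⟨hj, hlt⟩
          exact ⟨hj, Nat.lt_succ_of_lt hlt⟩
      rw [he]
      simp
  · rw [dif_neg h]
    have he : S.filter (fun (j : Fin n) => (j : ℕ) < m + 1) = S.filter (fun (j : Fin n) => (j : ℕ) < m) := by
      ext j
      simp only [Finset.mem_filter]
      have := j.2
      constructor
      · rintro ⟨hj, _⟩; exact ⟨hj, by omega⟩
      · rintro ⟨hj, _⟩; exact ⟨hj, by omega⟩
    rw [he]
    simp

/-- the key fixed-point characterization -/
def CharF {n : ℕ} (a : Fin n → ℕ) (S : Finset (Fin n)) : Prop :=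
  ∀ i : Fin n, (i ∈ S → (i : ℕ) ≤ a i + cntF S (i : ℕ)) ∧
    (i ∉ S → a i + cntF S (i : ℕ) ≤ (i : ℕ))


section Main
variable {n k : ℕ} (a : Fin n → ℕ)

/-- Char implies condition (1). -/
lemma charP1 {S : Finset (Fin n)} (hchar : CharF a S) :
    skipDvd S (fun i => a i + (if i ∈ S then 1 else 0)) := by
  intro i
  by_cases hi : i ∈ S
  · rw [skipExp, if_pos hi, sigma_eq]
    have h1 := (hchar i).1 hi
    simp only [if_pos hi]
    omega
  · rw [skipExp, if_neg hi]
    exact Nat.zero_le _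

/-- Char (with the right cardinality) implies condition (2). -/
lemma charP2 {S : Finset (Fin n)} (hchar : CharF a S) (hcard : S.card = n - k)
    (U : Finset (Fin n)) (hU : U.card = n - k + 1) :
    ¬ skipDvd U (fun i => a i + (if i ∈ S then 1 else 0)) := by
  intro hdvd
  have key : ∀ m, cntF U m ≤ cntF S m := by
    intro m
    induction m with
    | zero => simp [cntF_zero]
    | succ m ih =>
      rw [cntF_succ, cntF_succ]
      by_cases h : m < n
      · rw [dif_pos h, dif_pos h]
        set i : Fin n := ⟨m, h⟩ with hidef
        by_cases hiU : i ∈ U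
        · have hskip := hdvd i
          rw [skipExp, if_pos hiU, sigma_eq] at hskip
          have hin : i ∈ S := by
            by_contra hiS
            simp only [if_neg hiS] at hskip
            have h2 := (hchar i).2 hiS
            simp only [hidef] at hskip h2
            omega
          rw [if_pos hiU, if_pos hin]
          omega
        · rw [if_neg hiU]
          split <;> omega
      · rw [dif_neg h, dif_neg h]
        omega
  have hn := key n
  rw [cntF_ge U le_rfl, cntF_ge S le_rfl, hU, hcard] at hn
  omega

lemma sigma_insert {S : Finset (Fin n)} {i : Fin n} (hi : i ∉ S) (j : Fin n) :
    ((insert i S).filter (fun l => l < j)).card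
      = (S.filter (fun l => l < j)).card + (if i < j then 1 else 0) := by
  rw [Finset.filter_insert]
  by_cases h : i < j
  · rw [if_pos h, if_pos h, Finset.card_insert_of_notMem (by simp [hi])]
  · rw [if_neg h, if_neg h]
    omega

/-- Conditions (1) and (2) (with the right cardinality) imply Char. -/
lemma P1P2Char {S : Finset (Fin n)} (hcard : S.card = n - k)
    (hP1 : skipDvd S (fun i => a i + (if i ∈ S then 1 else 0)))
    (hP2 : ∀ U : Finset (Fin n), U.card = n - k + 1 →
      ¬ skipDvd U (fun i => a i + (if i ∈ S then 1 else 0))) :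
    CharF a S := by
  intro i
  constructor
  · intro hi
    have h1 := hP1 i
    rw [skipExp, if_pos hi, sigma_eq] at h1
    simp only [if_pos hi] at h1
    omega
  · intro hi
    by_contra hcon
    push_neg at hcon
    have hU : (insert i S).card = n - k + 1 := by
      rw [Finset.card_insert_of_notMem hi, hcard]
    refine hP2 (insert i S) hU ?_
    intro j
    by_cases hj : j ∈ insert i S
    · rw [skipExp, if_pos hj, sigma_insert hi j]
      rcases Finset.mem_insert.mp hj with rfl | hjS
      · simp only [if_neg hi, Fin.lt_irrefl, if_neg (lt_irrefl j), sigma_eq]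
        omega
      · have h1 := hP1 j
        rw [skipExp, if_pos hjS] at h1
        simp only [if_pos hjS] at h1 ⊢
        split <;> omega
    · rw [skipExp, if_neg hj]
      exact Nat.zero_le _

/-- Two Char sets with the same cardinality are equal. -/
lemma charUnique {S S' : Finset (Fin n)} (h1 : CharF a S) (h2 : CharF a S')
    (hc : S.card = S'.card) : S = S' := by
  have pers : ∀ (T T' : Finset (Fin n)), CharF a T → CharF a T' → ∀ m,
      cntF T m < cntF T' m → cntF T (m + 1) < cntF T' (m + 1) := by
    intro T T' hT hT' m hlt
    rw [cntF_succ, cntF_succ]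
    by_cases h : m < n
    · rw [dif_pos h, dif_pos h]
      set i : Fin n := ⟨m, h⟩ with hidef
      by_cases hiT : i ∈ T
      · have hmem := (hT i).1 hiT
        have hin : i ∈ T' := by
          by_contra hiT'
          have := (hT' i).2 hiT'
          simp only [hidef] at hmem this
          omega
        rw [if_pos hiT, if_pos hin]
        omega
      · rw [if_neg hiT]
        split <;> omega
    · rw [dif_neg h, dif_neg h]
      omega
  have propag : ∀ (T T' : Finset (Fin n)), CharF a T → CharF a T' → ∀ m j,
      cntF T m < cntF T' m → cntF T (m + j) < cntF T' (m + j) := by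
    intro T T' hT hT' m j hlt
    induction j with
    | zero => exact hlt
    | succ j ih => exact pers T T' hT hT' (m + j) ih
  have eqc : ∀ m, cntF S m = cntF S' m := by
    intro m
    by_contra hne
    have hcard_eq : cntF S (m + n) = cntF S' (m + n) := by
      rw [cntF_ge S (by omega), cntF_ge S' (by omega), hc]
    rcases Nat.lt_or_ge (cntF S m) (cntF S' m) with hlt | hge
    · have := propag S S' h1 h2 m n hlt
      omega
    · have hlt : cntF S' m < cntF S m := by omega
      have := propag S' S h2 h1 m n hlt
      omega
  ext i
  have hstep1 := cntF_succ S (i : ℕ)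
  have hstep2 := cntF_succ S' (i : ℕ)
  rw [eqc, eqc] at hstep1
  rw [dif_pos i.2] at hstep1
  rw [dif_pos i.2] at hstep2
  simp only [Fin.eta] at hstep1 hstep2
  constructor
  · intro hi
    by_contra hi'
    rw [if_pos hi] at hstep1
    rw [if_neg hi'] at hstep2
    omega
  · intro hi
    by_contra hi'
    rw [if_neg hi'] at hstep1
    rw [if_pos hi] at hstep2
    omega

end Main

section Exist

def cntN (T : Finset ℕ) (m : ℕ) : ℕ := (T.filter (fun j => j < m)).card

lemma cntN_zero_of (T : Finset ℕ) (m : ℕ) (h : ∀ j ∈ T, m ≤ j) : cntN T m = 0 := by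
  unfold cntN
  rw [Finset.card_eq_zero, Finset.filter_eq_empty_iff]
  intro j hj
  have := h j hj
  omega

lemma cntN_insert (T : Finset ℕ) (i m : ℕ) (hi : i ∉ T) :
    cntN (insert i T) m = cntN T m + (if i < m then 1 else 0) := by
  unfold cntN
  rw [Finset.filter_insert]
  split
  · rw [Finset.card_insert_of_notMem (by simp [hi])]
  · omega

/-- the "lazy" greedy count: include position `i` only when `i < A i + t`. -/
def LZ (A : ℕ → ℕ) : ℕ → ℕ → ℕ → ℕ
  | 0, _, t => t
  | d+1, i, t => LZ A d (i+1) (if i < A i + t then t+1 else t)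

/-- the "eager" greedy count: include position `i` whenever `i ≤ A i + t`. -/
def EG (A : ℕ → ℕ) : ℕ → ℕ → ℕ → ℕ
  | 0, _, t => t
  | d+1, i, t => EG A d (i+1) (if i ≤ A i + t then t+1 else t)

lemma LZ_succ_eq (A : ℕ → ℕ) : ∀ d i t, LZ A d i (t+1) = EG A d i t + 1 := by
  intro d
  induction d with
  | zero => intro i t; rfl
  | succ d ih =>
    intro i t
    show LZ A d (i+1) _ = EG A d (i+1) _ + 1
    by_cases h : i ≤ A i + t
    · rw [if_pos (by omega), if_pos h]
      exact ih (i+1) (t+1)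
    · rw [if_neg (by omega), if_neg h]
      exact ih (i+1) t

lemma EG_full (A : ℕ → ℕ) : ∀ d i, EG A d i i = i + d := by
  intro d
  induction d with
  | zero => intro i; rfl
  | succ d ih =>
    intro i
    show EG A d (i+1) _ = i + (d+1)
    rw [if_pos (Nat.le_add_left i (A i))]
    rw [ih (i+1)]
    omega

/-- `T` is a valid "Char continuation" from state `(i0, t)` with `d` remaining positions,
achieving total count `c`. -/
def Good (A : ℕ → ℕ) (d i0 t c : ℕ) (T : Finset ℕ) : Prop :=
  (∀ j ∈ T, i0 ≤ j ∧ j < i0 + d) ∧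
  (∀ m, i0 ≤ m → m < i0 + d →
    (m ∈ T → m ≤ A m + (t + cntN T m)) ∧ (m ∉ T → A m + (t + cntN T m) ≤ m)) ∧
  t + T.card = c

lemma goodInsert {A : ℕ → ℕ} {d i0 t c : ℕ} {T : Finset ℕ} (hle : i0 ≤ A i0 + t)
    (hT : Good A d (i0+1) (t+1) c T) : Good A (d+1) i0 t c (insert i0 T) := by
  obtain ⟨hb, hcond, hcard⟩ := hT
  have hi0T : i0 ∉ T := fun h => by have := (hb i0 h).1; omega
  refine ⟨?_, ?_, ?_⟩
  · intro j hj
    rcases Finset.mem_insert.mp hj with rfl | hj'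
    · omega
    · have := hb j hj'
      omega
  · intro m hm1 hm2
    by_cases hm : m = i0
    · subst hm
      constructor
      · intro _
        omega
      · intro hmem
        exact absurd (Finset.mem_insert_self m T) hmem
    · have hcnt : cntN (insert i0 T) m = cntN T m + 1 := by
        rw [cntN_insert T i0 m hi0T, if_pos (by omega)]
      have hc := hcond m (by omega) (by omega)
      constructor
      · intro hmem
        have hmT : m ∈ T := (Finset.mem_insert.mp hmem).resolve_left hm
        have := hc.1 hmT
        omega
      · intro hmem
        have hmT : m ∉ T := fun h => hmem (Finset.mem_insert_of_mem h)
        have := hc.2 hmT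
        omega
  · rw [Finset.card_insert_of_notMem hi0T]
    omega

lemma goodSkip {A : ℕ → ℕ} {d i0 t c : ℕ} {T : Finset ℕ} (hge : A i0 + t ≤ i0)
    (hT : Good A d (i0+1) t c T) : Good A (d+1) i0 t c T := by
  obtain ⟨hb, hcond, hcard⟩ := hT
  have hz : cntN T i0 = 0 := cntN_zero_of T i0 (fun j hj => by have := (hb j hj).1; omega)
  refine ⟨?_, ?_, hcard⟩
  · intro j hj
    have := hb j hj
    omega
  · intro m hm1 hm2
    by_cases hm : m = i0
    · subst hm
      constructor
      · intro hmem
        have := (hb m hmem).1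
        omega
      · intro _
        omega
    · exact hcond m (by omega) (by omega)

lemma ExMain (A : ℕ → ℕ) : ∀ (d i0 t c : ℕ), LZ A d i0 t ≤ c → c ≤ EG A d i0 t →
    ∃ T : Finset ℕ, Good A d i0 t c T := by
  intro d
  induction d with
  | zero =>
    intro i0 t c h1 h2
    refine ⟨∅, by simp, ?_, ?_⟩
    · intro m hm1 hm2
      omega
    · have ha : LZ A 0 i0 t = t := rfl
      have hb : EG A 0 i0 t = t := rfl
      rw [ha] at h1
      rw [hb] at h2
      simp
      omega
  | succ d ih =>
    intro i0 t c h1 h2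
    have hLZ : LZ A (d+1) i0 t = LZ A d (i0+1) (if i0 < A i0 + t then t+1 else t) := rfl
    have hEG : EG A (d+1) i0 t = EG A d (i0+1) (if i0 ≤ A i0 + t then t+1 else t) := rfl
    by_cases hle : i0 ≤ A i0 + t
    · rw [hEG, if_pos hle] at h2
      by_cases hlt : i0 < A i0 + t
      · rw [hLZ, if_pos hlt] at h1
        obtain ⟨T, hT⟩ := ih (i0+1) (t+1) c h1 h2
        exact ⟨insert i0 T, goodInsert hle hT⟩
      · -- tie : A i0 + t = i0
        rw [hLZ, if_neg hlt] at h1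
        by_cases hsub : c ≤ EG A d (i0+1) t
        · obtain ⟨T, hT⟩ := ih (i0+1) t c h1 hsub
          exact ⟨T, goodSkip (by omega) hT⟩
        · have h1' : LZ A d (i0+1) (t+1) ≤ c := by
            rw [LZ_succ_eq]
            omega
          obtain ⟨T, hT⟩ := ih (i0+1) (t+1) c h1' h2
          exact ⟨insert i0 T, goodInsert hle hT⟩
    · rw [hEG, if_neg hle] at h2
      rw [hLZ, if_neg (by omega)] at h1
      obtain ⟨T, hT⟩ := ih (i0+1) t c h1 h2
      exact ⟨T, goodSkip (by omega) hT⟩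


/-- the lazy process yields a set whose members satisfy the strict (skip-divisibility)
inequality. -/
lemma LZset (A : ℕ → ℕ) : ∀ d i0 t, ∃ T : Finset ℕ,
    (∀ j ∈ T, i0 ≤ j ∧ j < i0 + d) ∧
    (∀ m ∈ T, m < A m + (t + cntN T m)) ∧
    t + T.card = LZ A d i0 t := by
  intro d
  induction d with
  | zero =>
    intro i0 t
    exact ⟨∅, by simp, by simp, by simp [LZ]⟩
  | succ d ih =>
    intro i0 t
    have hLZ : LZ A (d+1) i0 t = LZ A d (i0+1) (if i0 < A i0 + t then t+1 else t) := rfl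
    by_cases hlt : i0 < A i0 + t
    · obtain ⟨T, hb, hs, hc⟩ := ih (i0+1) (t+1)
      have hi0T : i0 ∉ T := fun h => by have := (hb i0 h).1; omega
      refine ⟨insert i0 T, ?_, ?_, ?_⟩
      · intro j hj
        rcases Finset.mem_insert.mp hj with rfl | hj'
        · omega
        · have := hb j hj'
          omega
      · intro m hm
        rcases Finset.mem_insert.mp hm with rfl | hm'
        · omega
        · have h1 := hs m hm'
          have h2 := (hb m hm').1
          have hcnt : cntN (insert i0 T) m = cntN T m + 1 := by
            rw [cntN_insert T i0 m hi0T, if_pos (by omega)]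
          omega
      · rw [Finset.card_insert_of_notMem hi0T, hLZ, if_pos hlt]
        omega
    · obtain ⟨T, hb, hs, hc⟩ := ih (i0+1) t
      refine ⟨T, ?_, hs, ?_⟩
      · intro j hj
        have := hb j hj
        omega
      · rw [hLZ, if_neg hlt]
        exact hc

/-- shrink a strict set to a given smaller cardinality, by removing maxima. -/
lemma shrink (A : ℕ → ℕ) (c : ℕ) : ∀ (dd : ℕ) (T : Finset ℕ), T.card = c + dd →
    (∀ m ∈ T, m < A m + cntN T m) →
    ∃ U : Finset ℕ, U ⊆ T ∧ U.card = c ∧ ∀ m ∈ U, m < A m + cntN U m := by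
  intro dd
  induction dd with
  | zero =>
    intro T hc hs
    exact ⟨T, Finset.Subset.refl T, by omega, hs⟩
  | succ dd ih =>
    intro T hc hs
    have hne : T.Nonempty := Finset.card_pos.mp (by omega)
    set x := T.max' hne with hx
    have hxT : x ∈ T := T.max'_mem hne
    have hcnt : ∀ m ∈ T.erase x, cntN (T.erase x) m = cntN T m := by
      intro m hm
      have hmT : m ∈ T := Finset.mem_of_mem_erase hm
      have hmx : m ≤ x := T.le_max' m hmT
      unfold cntN
      rw [Finset.filter_erase, Finset.erase_eq_of_notMem]
      simp only [Finset.mem_filter]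
      rintro ⟨_, h⟩
      omega
    have hs' : ∀ m ∈ T.erase x, m < A m + cntN (T.erase x) m := by
      intro m hm
      rw [hcnt m hm]
      exact hs m (Finset.mem_of_mem_erase hm)
    have hc' : (T.erase x).card = c + dd := by
      rw [Finset.card_erase_of_mem hxT]
      omega
    obtain ⟨U, hsub, hUc, hUs⟩ := ih (T.erase x) hc' hs'
    exact ⟨U, hsub.trans (Finset.erase_subset x T), hUc, hUs⟩

/-- bridge: counting in a `Finset ℕ` bounded by `n` versus its lift to `Fin n`. -/
lemma bridgeCard {n : ℕ} (T : Finset ℕ) (hT : ∀ j ∈ T, j < n) (p : ℕ → Prop)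
    [DecidablePred p] :
    ((Finset.univ.filter (fun i : Fin n => p (i : ℕ) ∧ (i : ℕ) ∈ T))).card
      = (T.filter p).card := by
  apply Finset.card_bij (fun (i : Fin n) _ => (i : ℕ))
  · intro i hi
    rw [Finset.mem_filter] at hi
    exact Finset.mem_filter.mpr ⟨hi.2.2, hi.2.1⟩
  · intro i _ j _ h
    exact Fin.ext h
  · intro b hb
    rw [Finset.mem_filter] at hb
    exact ⟨⟨b, hT b hb.1⟩, Finset.mem_filter.mpr ⟨Finset.mem_univ _, hb.2, hb.1⟩, rfl⟩

lemma lift_card {n : ℕ} (T : Finset ℕ) (hT : ∀ j ∈ T, j < n) :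
    (Finset.univ.filter (fun i : Fin n => (i : ℕ) ∈ T)).card = T.card := by
  have h := bridgeCard T hT (fun _ => True)
  simp only [true_and, Finset.filter_true] at h
  exact h

lemma lift_cnt {n : ℕ} (T : Finset ℕ) (hT : ∀ j ∈ T, j < n) (m : ℕ) :
    cntF (Finset.univ.filter (fun i : Fin n => (i : ℕ) ∈ T)) m = cntN T m := by
  unfold cntF cntN
  rw [Finset.filter_filter]
  have h := bridgeCard T hT (fun j => j < m)
  rw [← h]
  congr 1
  apply Finset.filter_congr
  intro i _
  tauto

lemma lift_mem {n : ℕ} (T : Finset ℕ) (i : Fin n) :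
    i ∈ Finset.univ.filter (fun i : Fin n => (i : ℕ) ∈ T) ↔ (i : ℕ) ∈ T := by
  simp

end Exist

/-- Existence of a Char set of cardinality `n - k` for a nonskip exponent vector. -/
lemma charExists {n k : ℕ} (hkn : k ≤ n) (a : Fin n → ℕ)
    (ha : IsNonskip n k a) :
    ∃ S : Finset (Fin n), CharF a S ∧ S.card = n - k := by
  classical
  set A : ℕ → ℕ := fun m => if h : m < n then a ⟨m, h⟩ else 0 with hAdef
  have hA : ∀ i : Fin n, A (i : ℕ) = a i := by
    intro i
    simp [hAdef, i.2]
  have hEGf : EG A n 0 0 = n := by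
    have := EG_full A n 0
    omega
  have hLZb : LZ A n 0 0 ≤ n - k := by
    by_contra hcon
    push_neg at hcon
    obtain ⟨T0, hb0, hs0, hc0⟩ := LZset A n 0 0
    have hdd : T0.card = (n - k + 1) + (T0.card - (n - k + 1)) := by omega
    obtain ⟨U0, hsub, hUc, hUs⟩ := shrink A (n - k + 1) (T0.card - (n - k + 1)) T0 hdd
      (fun m hm => by have := hs0 m hm; omega)
    have hUb : ∀ j ∈ U0, j < n := fun j hj => by
      have := (hb0 j (hsub hj)).2
      omega
    refine ha.2 (Finset.univ.filter (fun i : Fin n => (i : ℕ) ∈ U0)) ?_ ?_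
    · rw [lift_card U0 hUb]
      exact hUc
    · intro i
      by_cases hi : i ∈ Finset.univ.filter (fun i : Fin n => (i : ℕ) ∈ U0)
      · rw [skipExp, if_pos hi, sigma_eq, lift_cnt U0 hUb]
        have hiU0 : (i : ℕ) ∈ U0 := (lift_mem U0 i).mp hi
        have hst := hUs (i : ℕ) hiU0
        rw [hA i] at hst
        omega
      · rw [skipExp, if_neg hi]
        exact Nat.zero_le _
  obtain ⟨T, hbT, hcondT, hcardT⟩ := ExMain A n 0 0 (n - k) hLZb (by omega)
  have hbTn : ∀ j ∈ T, j < n := fun j hj => by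
    have := (hbT j hj).2
    omega
  refine ⟨Finset.univ.filter (fun i : Fin n => (i : ℕ) ∈ T), ?_, ?_⟩
  · intro i
    have hc := hcondT (i : ℕ) (Nat.zero_le _) (by have := i.2; omega)
    have hcnt := lift_cnt T hbTn (i : ℕ)
    have hmem := lift_mem T i
    have hai := hA i
    constructor
    · intro hi
      have := hc.1 (hmem.mp hi)
      omega
    · intro hi
      have := hc.2 (fun h => hi (hmem.mpr h))
      omega
  · rw [lift_card T hbTn]
    omega

end Stmt3Aux


theorem stmt3 (n k : ℕ) (hk : 1 ≤ k) (hkn : k ≤ n) (a : Fin n → ℕ)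
    (ha : IsNonskip n k a) :
    ∃! S : Finset (Fin n), S.card = n - k ∧
      skipDvd S (fun i => a i + (if i ∈ S then 1 else 0)) ∧
      ∀ U : Finset (Fin n), U.card = n - k + 1 →
        ¬ skipDvd U (fun i => a i + (if i ∈ S then 1 else 0)) := by
  obtain ⟨S, hcharS, hcardS⟩ := Stmt3Aux.charExists hkn a ha
  refine ⟨S, ⟨hcardS, Stmt3Aux.charP1 a hcharS,
    fun U hU => Stmt3Aux.charP2 a hcharS hcardS U hU⟩, ?_⟩
  rintro S' ⟨hc', hP1', hP2'⟩
  exact Stmt3Aux.charUnique a (Stmt3Aux.P1P2Char a hc' hP1' hP2') hcharS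
    (by rw [hc', hcardS])
end

section
/- Let k ≤ n be positive integers. There exists a bijection Ψ : OP_{n,k} → M_{n,k} such that coinv(f) = deg(Ψ(f)) for every f ∈ OP_{n,k}. In particular |M_{n,k}| = |OP_{n,k}| and, for every d ≥ 0, the number of monomials in M_{n,k} of total degree d equals the number of f ∈ OP_{n,k} with coinv(f) = d. -/
/-- The inversion number of an ordered set partition, encoded as a function
`f : Fin n → Fin k` (where `f i` is the index of the block containing `i`): the number of
pairs `i < j` with `i` minimal in its block and `f j < f i`. -/
noncomputable def opInv {n k : ℕ} (f : Fin n → Fin k) : ℕ :=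
  Set.ncard {p : Fin n × Fin n |
    p.1 < p.2 ∧ (∀ i' : Fin n, i' < p.1 → f i' ≠ f p.1) ∧ f p.2 < f p.1}

/-- The complementary statistic `coinv(f) = (n−k)(k−1) + k(k−1)/2 − inv(f)`. -/
noncomputable def opCoinv (n k : ℕ) (f : Fin n → Fin k) : ℕ :=
  (n - k) * (k - 1) + k * (k - 1) / 2 - opInv f

namespace HRS


/-! ### counting processes -/

def uc (k : ℕ) (a : ℕ → ℕ) : ℕ → ℕ
  | 0 => 0
  | m+1 => uc k a m + if a m + uc k a m < k then 1 else 0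

def sc (a : ℕ → ℕ) : ℕ → ℕ
  | 0 => 0
  | m+1 => sc a m + if a m ≤ sc a m then 1 else 0

lemma uc_le (k : ℕ) (a : ℕ → ℕ) : ∀ m, uc k a m ≤ k
  | 0 => Nat.zero_le _
  | m+1 => by
    have := uc_le k a m
    simp only [uc]; split <;> omega

lemma sc_le (a : ℕ → ℕ) : ∀ m, sc a m ≤ m
  | 0 => le_rfl
  | m+1 => by
    have := sc_le a m
    simp only [sc]; split <;> omega

/-- The key reversal lemma. -/
lemma rev_lemma (k n : ℕ) (a b : ℕ → ℕ) (hab : ∀ m, m < n → b (n - 1 - m) = a m) :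
    uc k a n = k ↔ k ≤ sc b n := by
  have key : ∀ m ≤ n, ((k ≤ uc k a m + sc b (n - m)) ↔ k ≤ sc b n) := by
    intro m hm
    induction m with
    | zero => simp [uc]
    | succ m ih =>
      have hmn : m < n := hm
      have ih' := ih (le_of_lt hmn)
      rw [← ih']
      have h1 : n - m = (n - (m+1)) + 1 := by omega
      have h2 : b (n - (m+1)) = a m := by
        have := hab m hmn
        have : n - 1 - m = n - (m+1) := by omega
        rw [← this]; exact hab m hmn
      rw [h1]
      simp only [uc, sc, h2]
      split <;> split <;> omega
  have := key n le_rfl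
  simp only [Nat.sub_self] at this
  have hle := uc_le k a n
  simp only [sc] at this
  omega



open Finset

variable {c : ℕ} {α : Type*} [LinearOrder α]

lemma count_below [DecidableEq α] (T : Finset α) (h : T.card = c) (t : Fin c) :
    (T.filter (fun x => x < T.orderEmbOfFin h t)).card = t.val := by
  have himg : T.filter (fun x => x < T.orderEmbOfFin h t)
      = (Finset.Iio t).image (T.orderEmbOfFin h) := by
    ext x
    simp only [mem_filter, mem_image, Finset.mem_Iio]
    constructor
    · rintro ⟨hxT, hxlt⟩
      have : x ∈ Set.range (T.orderEmbOfFin h) := by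
        rw [Finset.range_orderEmbOfFin]; exact hxT
      obtain ⟨t', rfl⟩ := this
      exact ⟨t', by simpa using hxlt, rfl⟩
    · rintro ⟨t', ht', rfl⟩
      exact ⟨Finset.orderEmbOfFin_mem T h t', by simpa using ht'⟩
  rw [himg, Finset.card_image_of_injective _ (T.orderEmbOfFin h).injective, Fin.card_Iio]

lemma count_above [DecidableEq α] (T : Finset α) (h : T.card = c) (t : Fin c) :
    (T.filter (fun x => T.orderEmbOfFin h t < x)).card = c - 1 - t.val := by
  have himg : T.filter (fun x => T.orderEmbOfFin h t < x)
      = (Finset.Ioi t).image (T.orderEmbOfFin h) := by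
    ext x
    simp only [mem_filter, mem_image, Finset.mem_Ioi]
    constructor
    · rintro ⟨hxT, hxlt⟩
      have : x ∈ Set.range (T.orderEmbOfFin h) := by
        rw [Finset.range_orderEmbOfFin]; exact hxT
      obtain ⟨t', rfl⟩ := this
      exact ⟨t', by simpa using hxlt, rfl⟩
    · rintro ⟨t', ht', rfl⟩
      exact ⟨Finset.orderEmbOfFin_mem T h t', by simpa using ht'⟩
  rw [himg, Finset.card_image_of_injective _ (T.orderEmbOfFin h).injective, Fin.card_Ioi]

/-- strict antitonicity of corank -/
lemma corank_lt {T : Finset α} {v w : α} (hw : w ∈ T) (hvw : v < w) :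
    (T.filter (fun x => w < x)).card < (T.filter (fun x => v < x)).card := by
  apply Finset.card_lt_card
  constructor
  · intro x hx
    simp only [mem_filter] at hx ⊢
    exact ⟨hx.1, lt_trans hvw hx.2⟩
  · intro hsub
    have : w ∈ T.filter (fun x => v < x) := by simp [hw, hvw]
    have := hsub this
    simp at this

lemma corank_injOn {T : Finset α} {v w : α} (hv : v ∈ T) (hw : w ∈ T)
    (h : (T.filter (fun x => v < x)).card = (T.filter (fun x => w < x)).card) : v = w := by
  rcases lt_trichotomy v w with h' | h' | h'
  · have := corank_lt hw h'; omega
  · exact h'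
  · have := corank_lt hv h'; omega

variable {k : ℕ}

/-- pick the element of `T` whose corank (number of greater elements of `T`) is `c`. -/
noncomputable def pick (hk : 0 < k) (T : Finset (Fin k)) (c : ℕ) : Fin k :=
  let s := T.filter (fun v => (T.filter (fun w => v < w)).card = c)
  if h : s.Nonempty then s.min' h else ⟨0, hk⟩

lemma pick_eq (hk : 0 < k) {T : Finset (Fin k)} {c : ℕ} {v : Fin k}
    (hv : v ∈ T) (hc : (T.filter (fun w => v < w)).card = c) : pick hk T c = v := by
  have hs : T.filter (fun v => (T.filter (fun w => v < w)).card = c) = {v} := by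
    ext w
    simp only [mem_filter, Finset.mem_singleton]
    constructor
    · rintro ⟨hwT, hw⟩
      exact corank_injOn hwT hv (hw.trans hc.symm)
    · rintro rfl; exact ⟨hv, hc⟩
  rw [pick]
  simp only [hs]
  rw [dif_pos ⟨v, Finset.mem_singleton_self v⟩]
  exact Finset.min'_singleton v

lemma pick_spec (hk : 0 < k) {T : Finset (Fin k)} {c : ℕ} (hc : c < T.card) :
    pick hk T c ∈ T ∧ (T.filter (fun w => pick hk T c < w)).card = c := by
  set t : Fin T.card := ⟨T.card - 1 - c, by omega⟩
  have hmem := Finset.orderEmbOfFin_mem T rfl t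
  have hcount := count_above T rfl t
  have ht : T.card - 1 - t.val = c := by simp only [t]; omega
  rw [ht] at hcount
  rw [pick_eq hk hmem hcount]
  exact ⟨hmem, hcount⟩



open Finset

variable {n k : ℕ}

def aseq (a : Fin n → ℕ) : ℕ → ℕ := fun m => if h : m < n then a ⟨m, h⟩ else 0

@[simp] lemma aseq_val (a : Fin n → ℕ) (i : Fin n) : aseq a i.val = a i := by
  simp [aseq]

def Bigs (a : Fin n → ℕ) : Finset (Fin n) :=
  univ.filter (fun i => ¬ a i ≤ sc (aseq a) i.val)

lemma sc_card (a : Fin n → ℕ) {m : ℕ} (hm : m ≤ n) :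
    sc (aseq a) m
      = (univ.filter (fun i : Fin n => i.val < m ∧ a i ≤ sc (aseq a) i.val)).card := by
  induction m with
  | zero => simp [sc]
  | succ m ih =>
    have hmn : m < n := hm
    have heq : univ.filter (fun i : Fin n => i.val < m + 1 ∧ a i ≤ sc (aseq a) i.val)
        = (univ.filter (fun i : Fin n => i.val < m ∧ a i ≤ sc (aseq a) i.val))
          ∪ (univ.filter (fun i : Fin n => i.val = m ∧ a i ≤ sc (aseq a) i.val)) := by
      ext x
      simp only [mem_union, mem_filter, mem_univ, true_and]
      omega
    have hdisj : Disjoint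
        (univ.filter (fun i : Fin n => i.val < m ∧ a i ≤ sc (aseq a) i.val))
        (univ.filter (fun i : Fin n => i.val = m ∧ a i ≤ sc (aseq a) i.val)) := by
      rw [Finset.disjoint_left]
      intro x hx1 hx2
      simp only [mem_filter, mem_univ, true_and] at hx1 hx2
      omega
    have hsingle : (univ.filter (fun i : Fin n => i.val = m ∧ a i ≤ sc (aseq a) i.val)).card
        = if a ⟨m, hmn⟩ ≤ sc (aseq a) m then 1 else 0 := by
      split
      · next h =>
        rw [Finset.card_eq_one]
        refine ⟨⟨m, hmn⟩, ?_⟩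
        ext x
        simp only [mem_filter, mem_univ, true_and, Finset.mem_singleton, Fin.ext_iff]
        constructor
        · rintro ⟨h1, _⟩; exact h1
        · rintro rfl; exact ⟨rfl, h⟩
      · next h =>
        rw [Finset.card_eq_zero, Finset.filter_eq_empty_iff]
        rintro x -
        rintro ⟨h1, h2⟩
        apply h
        have : x = ⟨m, hmn⟩ := Fin.ext h1
        rw [this] at h2
        simpa [h1] using h2
    rw [heq, Finset.card_union_of_disjoint hdisj, ← ih (le_of_lt hmn), hsingle]
    simp only [sc]
    have : aseq a m = a ⟨m, hmn⟩ := by simp [aseq, hmn]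
    rw [this]

lemma card_lt_filter (i : Fin n) : (univ.filter (fun x : Fin n => x < i)).card = i.val := by
  have : univ.filter (fun x : Fin n => x < i) = Finset.Iio i := by
    ext x; simp [Finset.mem_Iio]
  rw [this, Fin.card_Iio]

lemma bigs_below (a : Fin n → ℕ) (i : Fin n) :
    ((Bigs a).filter (fun x => x < i)).card = i.val - sc (aseq a) i.val := by
  have h1 := Finset.card_filter_add_card_filter_not
    (s := univ.filter (fun x : Fin n => x < i)) (p := fun x => a x ≤ sc (aseq a) x.val)
  rw [card_lt_filter] at h1
  have h2 : (univ.filter (fun x : Fin n => x < i)).filter (fun x => a x ≤ sc (aseq a) x.val)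
      = univ.filter (fun x : Fin n => x.val < i.val ∧ a x ≤ sc (aseq a) x.val) := by
    rw [Finset.filter_filter]
    congr 1
  have h3 : (univ.filter (fun x : Fin n => x < i)).filter (fun x => ¬ a x ≤ sc (aseq a) x.val)
      = (Bigs a).filter (fun x => x < i) := by
    rw [Finset.filter_filter, Bigs, Finset.filter_filter]
    congr 1
    ext x
    tauto
  rw [h2, h3] at h1
  rw [← sc_card a (le_of_lt i.isLt)] at h1
  have := sc_le (aseq a) i.val
  omega

lemma bigs_total (a : Fin n → ℕ) :
    (Bigs a).card = n - sc (aseq a) n := by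
  have h1 := Finset.card_filter_add_card_filter_not
    (s := (univ : Finset (Fin n))) (p := fun x => a x ≤ sc (aseq a) x.val)
  have h2 : (univ : Finset (Fin n)).filter (fun x => a x ≤ sc (aseq a) x.val)
      = univ.filter (fun i : Fin n => i.val < n ∧ a i ≤ sc (aseq a) i.val) := by
    congr 1
    ext x
    simp [x.isLt]
  rw [h2, ← sc_card a le_rfl, Finset.card_univ, Fintype.card_fin] at h1
  have := sc_le (aseq a) n
  rw [Bigs]
  omega

lemma subset_bigs {a : Fin n → ℕ} {S : Finset (Fin n)} (hS : skipDvd S a) :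
    S ⊆ Bigs a := by
  have main : ∀ m : ℕ, ∀ i : Fin n, i ∈ S → i.val < m → i ∈ Bigs a := by
    intro m
    induction m with
    | zero => omega
    | succ m ih =>
      intro i hiS him
      by_cases hlast : i.val < m
      · exact ih i hiS hlast
      -- i.val = m
      simp only [Bigs, mem_filter, mem_univ, true_and]
      intro hsmall
      have hsub : S.filter (fun x => x < i) ⊆ (Bigs a).filter (fun x => x < i) := by
        intro x hx
        simp only [mem_filter] at hx ⊢
        exact ⟨ih x hx.1 (by have := hx.2; omega), hx.2⟩
      have hj := Finset.card_le_card hsub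
      rw [bigs_below] at hj
      have hskip := hS i
      rw [skipExp, if_pos hiS] at hskip
      have hscle := sc_le (aseq a) i.val
      have hile : (S.filter (fun j => j < i)).card ≤ i.val := by
        have hsub2 : S.filter (fun j => j < i) ⊆ univ.filter (fun x : Fin n => x < i) :=
          Finset.filter_subset_filter _ (Finset.subset_univ S)
        have := Finset.card_le_card hsub2
        rw [card_lt_filter] at this
        exact this
      omega
  exact fun i hi => main n i hi i.isLt

lemma exists_skip {a : Fin n → ℕ} {m : ℕ} (hm : 0 < m) (hB : m ≤ (Bigs a).card) :
    ∃ S : Finset (Fin n), S.card = m ∧ skipDvd S a := by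
  set emb := (Bigs a).orderEmbOfFin rfl with hemb
  set g : Fin m → Fin n := fun t => emb ⟨t.val, lt_of_lt_of_le t.isLt hB⟩ with hg
  have hginj : Function.Injective g := by
    intro t1 t2 h
    have := emb.injective h
    simpa [Fin.ext_iff] using this
  refine ⟨Finset.image g univ, ?_, ?_⟩
  · rw [Finset.card_image_of_injective _ hginj, Finset.card_univ, Fintype.card_fin]
  · intro i
    rw [skipExp]
    split
    · next hiS =>
      obtain ⟨t, -, rfl⟩ := Finset.mem_image.mp hiS
      set t' : Fin (Bigs a).card := ⟨t.val, lt_of_lt_of_le t.isLt hB⟩ with ht'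
      have hfilter : (Finset.image g univ).filter (fun j => j < g t) 
          = Finset.image g (univ.filter (fun s => s < t)) := by
        ext x
        simp only [mem_filter, mem_image, mem_univ, true_and]
        constructor
        · rintro ⟨⟨s, rfl⟩, hlt⟩
          refine ⟨s, ?_, rfl⟩
          have h2 := emb.lt_iff_lt.mp hlt
          simp only [Fin.lt_def] at h2 ⊢
          exact h2
        · rintro ⟨s, hs, rfl⟩
          refine ⟨⟨s, rfl⟩, ?_⟩
          apply emb.lt_iff_lt.mpr
          simp only [Fin.lt_def] at hs ⊢
          exact hs
      have hcard : ((Finset.image g univ).filter (fun j => j < g t)).card = t.val := by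
        rw [hfilter, Finset.card_image_of_injective _ hginj]
        have : univ.filter (fun s : Fin m => s < t) = Finset.Iio t := by
          ext x; simp [Finset.mem_Iio]
        rw [this, Fin.card_Iio]
      rw [hcard]
      -- g t is big, and number of bigs below g t is t
      have hbig : g t ∈ Bigs a := Finset.orderEmbOfFin_mem _ rfl t'
      have hbelow : ((Bigs a).filter (fun x => x < g t)).card = t.val := by
        have := count_below (Bigs a) rfl t'
        simpa using this
      rw [bigs_below] at hbelow
      simp only [Bigs, mem_filter, mem_univ, true_and] at hbig
      have := sc_le (aseq a) (g t).val
      omega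
    · exact Nat.zero_le _


lemma nonskip_iff (hk : 1 ≤ k) (hkn : k ≤ n) (a : Fin n → ℕ) :
    IsNonskip n k a ↔ (∀ i, ¬ k ≤ a i) ∧ k ≤ sc (aseq a) n := by
  constructor
  · rintro ⟨h1, h2⟩
    refine ⟨h1, ?_⟩
    by_contra hsc
    have hB : n - k + 1 ≤ (Bigs a).card := by
      rw [bigs_total]
      omega
    obtain ⟨S, hcard, hdvd⟩ := exists_skip (by omega) hB
    exact h2 S hcard hdvd
  · rintro ⟨h1, h2⟩
    refine ⟨h1, ?_⟩
    intro S hcard hdvd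
    have := Finset.card_le_card (subset_bigs hdvd)
    rw [bigs_total] at this
    have := sc_le (aseq a) n
    omega

/-! ### encoding ordered set partitions -/

def usedc (f : Fin n → Fin k) (m : ℕ) : Finset (Fin k) :=
  (univ.filter (fun j : Fin n => j.val < m)).image f

lemma mem_usedc {f : Fin n → Fin k} {m : ℕ} {v : Fin k} :
    v ∈ usedc f m ↔ ∃ j : Fin n, j.val < m ∧ f j = v := by
  simp [usedc]

def code (f : Fin n → Fin k) (i : Fin n) : ℕ :=
  (univ.filter (fun v => f i < v ∧ v ∉ usedc f i.val)).card +
    (if f i ∈ usedc f i.val then (f i : ℕ) else 0)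

/-- the three-way split count -/
lemma split3 (u : Finset (Fin k)) (x : Fin k) :
    (univ.filter (fun w => x < w ∧ w ∉ u)).card + (u.filter (fun w => x < w)).card
      + x.val + 1 = k := by
  have h1 := Finset.card_filter_add_card_filter_not
    (s := univ.filter (fun w : Fin k => x < w)) (p := fun w => w ∈ u)
  have hIoi : (univ.filter (fun w : Fin k => x < w)).card = k - 1 - x.val := by
    have : univ.filter (fun w : Fin k => x < w) = Finset.Ioi x := by
      ext w; simp [Finset.mem_Ioi]
    rw [this, Fin.card_Ioi]
  have h2 : (univ.filter (fun w : Fin k => x < w)).filter (fun w => w ∈ u)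
      = u.filter (fun w => x < w) := by
    rw [Finset.filter_filter]
    ext w
    simp only [mem_filter, mem_univ, true_and]
    tauto
  have h3 : (univ.filter (fun w : Fin k => x < w)).filter (fun w => ¬ w ∈ u)
      = univ.filter (fun w : Fin k => x < w ∧ w ∉ u) := by
    rw [Finset.filter_filter]
  rw [h2, h3, hIoi] at h1
  have hx := x.isLt
  omega

lemma usedc_succ (f : Fin n → Fin k) {m : ℕ} (hm : m < n) :
    usedc f (m + 1) = insert (f ⟨m, hm⟩) (usedc f m) := by
  ext v
  simp only [mem_usedc, Finset.mem_insert]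
  constructor
  · rintro ⟨j, hj, rfl⟩
    by_cases h : j.val < m
    · exact Or.inr ⟨j, h, rfl⟩
    · left
      have hje : j = ⟨m, hm⟩ := Fin.ext (show j.val = m by omega)
      rw [hje]
  · rintro (rfl | ⟨j, hj, rfl⟩)
    · exact ⟨⟨m, hm⟩, Nat.lt_succ_self m, rfl⟩
    · exact ⟨j, Nat.lt_succ_of_lt hj, rfl⟩

lemma usedc_card_le (f : Fin n → Fin k) (m : ℕ) : (usedc f m).card ≤ k := by
  have := Finset.card_le_univ (usedc f m)
  simpa using this

/-- the branch dichotomy: `code f i + |used| < k` iff `i` is minimal. -/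
lemma code_branch (f : Fin n → Fin k) (i : Fin n) :
    code f i + (usedc f i.val).card < k ↔ f i ∉ usedc f i.val := by
  have hsplit := split3 (usedc f i.val) (f i)
  constructor
  · intro h hmem
    -- nonminimal: code = A + x and B < |u|
    rw [code, if_pos hmem] at h
    have hBu : ((usedc f i.val).filter (fun w => f i < w)).card < (usedc f i.val).card := by
      apply Finset.card_lt_card
      constructor
      · exact Finset.filter_subset _ _
      · intro hsub
        have := hsub hmem
        simp at this
    omega
  · intro hmem
    rw [code, if_neg hmem]
    -- minimal: code = A, and A + 1 ≤ |uᶜ|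
    have hA : (univ.filter (fun v => f i < v ∧ v ∉ usedc f i.val)).card + (usedc f i.val).card
        < k := by
      have hsub : insert (f i) (univ.filter (fun v => f i < v ∧ v ∉ usedc f i.val))
          ⊆ (usedc f i.val)ᶜ := by
        intro x hx
        rcases Finset.mem_insert.mp hx with rfl | hx
        · simpa using hmem
        · simp only [mem_filter] at hx
          simpa using hx.2.2
      have hcard := Finset.card_le_card hsub
      rw [Finset.card_insert_of_notMem (by simp)] at hcard
      rw [Finset.card_compl, Fintype.card_fin] at hcard
      have := usedc_card_le f i.val
      omega
    omega

lemma code_lt (f : Fin n → Fin k) (i : Fin n) : code f i < k := by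
  have hsplit := split3 (usedc f i.val) (f i)
  rw [code]
  split <;> omega

lemma uc_code (f : Fin n → Fin k) : ∀ m, m ≤ n → uc k (aseq (code f)) m = (usedc f m).card := by
  intro m
  induction m with
  | zero =>
    intro _
    have h0 : usedc f 0 = ∅ := by
      ext v; simp [mem_usedc]
    rw [h0]
    simp [uc]
  | succ m ih =>
    intro hm
    have hmn : m < n := hm
    have ihm := ih (le_of_lt hmn)
    have haseq : aseq (code f) m = code f ⟨m, hmn⟩ := by simp [aseq, hmn]
    have hcond := code_branch f ⟨m, hmn⟩
    simp only [Fin.val_mk] at hcond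
    rw [show uc k (aseq (code f)) (m+1) = uc k (aseq (code f)) m
        + if aseq (code f) m + uc k (aseq (code f)) m < k then 1 else 0 from rfl]
    rw [haseq, ihm, usedc_succ f hmn]
    by_cases hmem : f ⟨m, hmn⟩ ∈ usedc f m
    · rw [Finset.insert_eq_self.mpr hmem, if_neg (fun h => (hcond.mp h) hmem)]
      omega
    · rw [Finset.card_insert_of_notMem hmem, if_pos (hcond.mpr hmem)]

lemma usedc_n (f : Fin n → Fin k) (hf : Function.Surjective f) :
    (usedc f n).card = k := by
  have : usedc f n = univ := by
    rw [Finset.eq_univ_iff_forall]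
    intro v
    obtain ⟨j, rfl⟩ := hf v
    exact mem_usedc.mpr ⟨j, j.isLt, rfl⟩
  rw [this, Finset.card_univ, Fintype.card_fin]

lemma surj_of_usedc (f : Fin n → Fin k) (h : (usedc f n).card = k) :
    Function.Surjective f := by
  have huniv : usedc f n = univ := Finset.eq_univ_of_card _ (by simpa using h)
  intro v
  have : v ∈ usedc f n := huniv ▸ Finset.mem_univ v
  obtain ⟨j, -, rfl⟩ := mem_usedc.mp this
  exact ⟨j, rfl⟩

/-! ### decoding -/

variable (hk : 0 < k)

noncomputable def dec (hk : 0 < k) (a : Fin n → ℕ) : Fin n → Fin k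
  | i =>
    let U : Finset (Fin k) :=
      ((univ.filter (fun j : Fin n => j < i)).attach).image
        (fun j => dec hk a j.1)
    if a i + U.card < k then pick hk Uᶜ (a i) else pick hk U (k - 1 - a i)
  termination_by i => i.val
  decreasing_by
    have := j.2
    simp only [Finset.mem_filter, Finset.mem_univ, true_and, Fin.lt_def] at this
    exact this

lemma dec_eq (a : Fin n → ℕ) (i : Fin n) :
    dec hk a i = (if a i + (usedc (dec hk a) i.val).card < k
      then pick hk (usedc (dec hk a) i.val)ᶜ (a i)
      else pick hk (usedc (dec hk a) i.val) (k - 1 - a i)) := by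
  have hU : ((univ.filter (fun j : Fin n => j < i)).attach).image
        (fun j => dec hk a j.1) = usedc (dec hk a) i.val := by
    rw [usedc]
    have h2 : univ.filter (fun j : Fin n => j.val < i.val)
        = univ.filter (fun j : Fin n => j < i) := by
      congr 1
    rw [h2]
    ext v
    simp only [Finset.mem_image, Finset.mem_attach, true_and, Subtype.exists, exists_prop,
      mem_filter, mem_univ]
  conv_lhs => rw [dec]
  simp only [hU]

/-- encode after decode -/
lemma code_dec (a : Fin n → ℕ) (ha : ∀ i, a i < k) (i : Fin n) :
    code (dec hk a) i = a i := by
  have hucard : (usedc (dec hk a) i.val).card ≤ k := usedc_card_le (dec hk a) i.val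
  have hdec := dec_eq hk a i
  by_cases hbr : a i + (usedc (dec hk a) i.val).card < k
  · rw [if_pos hbr] at hdec
    have hfeas : a i < (usedc (dec hk a) i.val)ᶜ.card := by
      rw [Finset.card_compl, Fintype.card_fin]
      omega
    obtain ⟨hmem, hcorank⟩ := pick_spec hk hfeas
    rw [← hdec] at hmem hcorank
    have hnotmem : dec hk a i ∉ usedc (dec hk a) i.val := by simpa using hmem
    rw [code, if_neg hnotmem]
    have heq : univ.filter (fun v => dec hk a i < v ∧ v ∉ usedc (dec hk a) i.val)
        = (usedc (dec hk a) i.val)ᶜ.filter (fun w => dec hk a i < w) := by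
      ext w
      simp only [mem_filter, mem_univ, true_and, Finset.mem_compl]
      tauto
    rw [heq, hcorank]
    omega
  · rw [if_neg hbr] at hdec
    push_neg at hbr
    have hfeas : k - 1 - a i < (usedc (dec hk a) i.val).card := by
      have := ha i
      omega
    obtain ⟨hmem, hcorank⟩ := pick_spec hk hfeas
    rw [← hdec] at hmem hcorank
    rw [code, if_pos hmem]
    have hsplit := split3 (usedc (dec hk a) i.val) (dec hk a i)
    have hai := ha i
    have hvi := (dec hk a i).isLt
    omega

/-- decode after encode -/
lemma dec_code (f : Fin n → Fin k) : dec hk (code f) = f := by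
  funext i0
  have main : ∀ m : ℕ, ∀ i : Fin n, i.val < m → dec hk (code f) i = f i := by
    intro m
    induction m with
    | zero => omega
    | succ m ih =>
      intro i him
      by_cases hlt : i.val < m
      · exact ih i hlt
      have hused : usedc (dec hk (code f)) i.val = usedc f i.val := by
        rw [usedc, usedc]
        apply Finset.image_congr
        intro x hx
        simp only [Finset.mem_coe, mem_filter, mem_univ, true_and] at hx
        exact ih x (by omega)
      have hdec := dec_eq hk (code f) i
      rw [hused] at hdec
      have hcond := code_branch f i
      by_cases hmem : f i ∈ usedc f i.val
      · have hbr : ¬ (code f i + (usedc f i.val).card < k) := fun h => (hcond.mp h) hmem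
        rw [if_neg hbr] at hdec
        rw [hdec]
        apply pick_eq hk hmem
        -- corank of f i in used = k - 1 - code f i
        have hsplit := split3 (usedc f i.val) (f i)
        rw [code, if_pos hmem]
        omega
      · have hbr : code f i + (usedc f i.val).card < k := hcond.mpr hmem
        rw [if_pos hbr] at hdec
        rw [hdec]
        apply pick_eq hk (by simpa using hmem)
        have heq : (usedc f i.val)ᶜ.filter (fun w => f i < w)
            = univ.filter (fun v => f i < v ∧ v ∉ usedc f i.val) := by
          ext w
          simp only [mem_filter, mem_univ, true_and, Finset.mem_compl]
          tauto
        rw [heq, code, if_neg hmem]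
        omega
  exact main n i0 i0.isLt

/-! ### the statistic -/

def iot (f : Fin n → Fin k) (i : Fin n) : ℕ :=
  ((usedc f i.val).filter (fun v => f i < v)).card

lemma minimal_iff {f : Fin n → Fin k} {i : Fin n} :
    f i ∉ usedc f i.val ↔ ∀ j, j < i → f j ≠ f i := by
  rw [mem_usedc]
  push_neg
  constructor
  · intro h j hj
    exact h j hj
  · intro h j hj
    exact h j hj

lemma opInv_eq (f : Fin n → Fin k) : opInv f = ∑ j : Fin n, iot f j := by
  classical
  rw [opInv, Set.ncard_eq_toFinset_card', Set.toFinset_setOf]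
  rw [Finset.card_filter]
  rw [Fintype.sum_prod_type_right]
  congr 1
  funext j
  rw [← Finset.card_filter]
  rw [iot]
  apply Finset.card_bij (fun i _ => f i)
  · intro i hi
    simp only [mem_filter, mem_univ, true_and] at hi ⊢
    exact ⟨mem_usedc.mpr ⟨i, hi.1, rfl⟩, hi.2.2⟩
  · intro i1 h1 i2 h2 heq
    simp only [mem_filter, mem_univ, true_and] at h1 h2
    rcases lt_trichotomy i1 i2 with h | h | h
    · exact absurd heq (h2.2.1 i1 h)
    · exact h
    · exact absurd heq.symm (h1.2.1 i2 h)
  · intro v hv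
    simp only [mem_filter] at hv
    obtain ⟨hvused, hvgt⟩ := hv
    obtain ⟨j0, hj0, hfj0⟩ := mem_usedc.mp hvused
    have hne : (univ.filter (fun x : Fin n => x.val < j.val ∧ f x = v)).Nonempty :=
      ⟨j0, by simp only [mem_filter, mem_univ, true_and]; exact ⟨hj0, hfj0⟩⟩
    set i0 := (univ.filter (fun x : Fin n => x.val < j.val ∧ f x = v)).min' hne with hi0
    have hi0mem := (univ.filter (fun x : Fin n => x.val < j.val ∧ f x = v)).min'_mem hne
    simp only [mem_filter, mem_univ, true_and] at hi0mem
    refine ⟨i0, ?_, hi0mem.2⟩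
    simp only [mem_filter, mem_univ, true_and]
    refine ⟨by rw [Fin.lt_def]; exact hi0mem.1, ?_, by rw [hi0mem.2]; exact hvgt⟩
    intro i' hi' hfeq
    have : i' ∈ univ.filter (fun x : Fin n => x.val < j.val ∧ f x = v) := by
      simp only [mem_filter, mem_univ, true_and]
      refine ⟨by omega, by rw [hfeq, hi0mem.2]⟩
    have := Finset.min'_le _ _ this
    exact absurd this (not_le.mpr hi')

lemma code_add_iot (f : Fin n → Fin k) (i : Fin n) :
    code f i + iot f i
      = if f i ∈ usedc f i.val then k - 1 else k - 1 - (f i).val := by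
  have hsplit := split3 (usedc f i.val) (f i)
  have := (f i).isLt
  rw [code, iot]
  split <;> omega

lemma mins_card (f : Fin n → Fin k) (hf : Function.Surjective f) :
    (univ.filter (fun i : Fin n => f i ∉ usedc f i.val)).card = k ∧
    Finset.image f (univ.filter (fun i : Fin n => f i ∉ usedc f i.val)) = univ ∧
    (∀ x ∈ univ.filter (fun i : Fin n => f i ∉ usedc f i.val),
      ∀ y ∈ univ.filter (fun i : Fin n => f i ∉ usedc f i.val), f x = f y → x = y) := by
  set Mins := univ.filter (fun i : Fin n => f i ∉ usedc f i.val) with hM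
  have hinj : ∀ x ∈ Mins, ∀ y ∈ Mins, f x = f y → x = y := by
    intro x hx y hy hxy
    simp only [hM, mem_filter, mem_univ, true_and, minimal_iff] at hx hy
    rcases lt_trichotomy x y with h | h | h
    · exact absurd hxy (hy x h)
    · exact h
    · exact absurd hxy.symm (hx y h)
  have himg : Finset.image f Mins = univ := by
    rw [Finset.eq_univ_iff_forall]
    intro v
    obtain ⟨j0, hfj0⟩ := hf v
    have hne : (univ.filter (fun x : Fin n => f x = v)).Nonempty := ⟨j0, by simp [hfj0]⟩
    set i0 := (univ.filter (fun x : Fin n => f x = v)).min' hne with hi0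
    have hi0mem := (univ.filter (fun x : Fin n => f x = v)).min'_mem hne
    simp only [mem_filter, mem_univ, true_and] at hi0mem
    rw [Finset.mem_image]
    refine ⟨i0, ?_, hi0mem⟩
    simp only [hM, mem_filter, mem_univ, true_and, minimal_iff]
    intro i' hi' hfeq
    have : i' ∈ univ.filter (fun x : Fin n => f x = v) := by
      simp only [mem_filter, mem_univ, true_and]
      rw [hfeq, hi0mem]
    have := Finset.min'_le _ _ this
    exact absurd this (not_le.mpr hi')
  have hcard : Mins.card = k := by
    have := Finset.card_image_of_injOn (f := f) (s := Mins) (fun x hx y hy => hinj x hx y hy)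
    rw [himg, Finset.card_univ, Fintype.card_fin] at this
    omega
  exact ⟨hcard, himg, hinj⟩

lemma sum_code_add_inv (f : Fin n → Fin k) (hf : Function.Surjective f) (hkn : k ≤ n) :
    (∑ i : Fin n, code f i) + opInv f = (n - k) * (k - 1) + k * (k - 1) / 2 := by
  obtain ⟨hcard, himg, hinj⟩ := mins_card f hf
  rw [opInv_eq, ← Finset.sum_add_distrib]
  have h1 : ∀ i : Fin n, code f i + iot f i
      = if f i ∈ usedc f i.val then k - 1 else k - 1 - (f i).val := code_add_iot f
  rw [Finset.sum_congr rfl (fun i _ => h1 i)]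
  rw [Finset.sum_ite]
  have hsplitcard := Finset.card_filter_add_card_filter_not
    (s := (univ : Finset (Fin n))) (p := fun i => f i ∈ usedc f i.val)
  have hcompl : univ.filter (fun i : Fin n => ¬ f i ∈ usedc f i.val)
      = univ.filter (fun i : Fin n => f i ∉ usedc f i.val) := rfl
  rw [hcompl] at hsplitcard
  rw [Finset.card_univ, Fintype.card_fin, hcard] at hsplitcard
  have hA : ∑ _i ∈ univ.filter (fun i : Fin n => f i ∈ usedc f i.val), (k-1)
      = (n - k) * (k - 1) := by
    rw [Finset.sum_const, smul_eq_mul]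
    congr 1
    omega
  have hB : ∑ i ∈ univ.filter (fun i : Fin n => ¬ f i ∈ usedc f i.val), (k - 1 - (f i).val)
      = k * (k - 1) / 2 := by
    have h2 : ∑ i ∈ univ.filter (fun i : Fin n => f i ∉ usedc f i.val), (k - 1 - (f i).val)
        = ∑ v ∈ Finset.image f (univ.filter (fun i : Fin n => f i ∉ usedc f i.val)),
            (k - 1 - v.val) := by
      rw [Finset.sum_image hinj]
    rw [h2, himg]
    have h3 : ∑ v : Fin k, (k - 1 - v.val) = ∑ j ∈ Finset.range k, (k - 1 - j) := by
      rw [Fin.sum_univ_eq_sum_range]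
    rw [h3]
    have h4 : ∑ j ∈ Finset.range k, (k - 1 - j) = ∑ j ∈ Finset.range k, j := by
      conv_rhs => rw [← Finset.sum_range_reflect]
    rw [h4]
    have h5 := Finset.sum_range_id_mul_two k
    omega
  rw [hA, hB]

/-! ### assembling the bijection -/

noncomputable def E1 (hk : 0 < k) : {f : Fin n → Fin k // Function.Surjective f} ≃
    {a : Fin n → ℕ // (∀ i, ¬ k ≤ a i) ∧ uc k (aseq a) n = k} where
  toFun f := ⟨code f.1, fun i => not_le.mpr (code_lt f.1 i), by
    rw [uc_code f.1 n le_rfl, usedc_n f.1 f.2]⟩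
  invFun a := ⟨dec hk a.1, by
    apply surj_of_usedc
    have h1 := uc_code (dec hk a.1) n le_rfl
    have h2 : code (dec hk a.1) = a.1 :=
      funext (code_dec hk a.1 (fun i => not_le.mp (a.2.1 i)))
    rw [h2] at h1
    rw [← h1, a.2.2]⟩
  left_inv f := Subtype.ext (dec_code hk f.1)
  right_inv a := Subtype.ext (funext (code_dec hk a.1 (fun i => not_le.mp (a.2.1 i))))

lemma aseq_rev (a : Fin n → ℕ) (m : ℕ) (hm : m < n) :
    aseq (fun i => a i.rev) (n - 1 - m) = aseq a m := by
  have h1 : n - 1 - m < n := by omega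
  rw [aseq, dif_pos h1]
  rw [aseq, dif_pos hm]
  congr 1
  apply Fin.ext
  rw [Fin.val_rev]
  simp only [Fin.val_mk]
  omega

lemma rev_cond (a : Fin n → ℕ) :
    uc k (aseq a) n = k ↔ k ≤ sc (aseq (fun i => a i.rev)) n :=
  rev_lemma k n (aseq a) (aseq (fun i => a i.rev)) (fun m hm => aseq_rev a m hm)

noncomputable def E2 : {a : Fin n → ℕ // (∀ i, ¬ k ≤ a i) ∧ uc k (aseq a) n = k} ≃
    {a : Fin n → ℕ // (∀ i, ¬ k ≤ a i) ∧ k ≤ sc (aseq a) n} where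
  toFun a := ⟨fun i => a.1 i.rev, fun i => a.2.1 i.rev, (rev_cond a.1).mp a.2.2⟩
  invFun b := ⟨fun i => b.1 i.rev, fun i => b.2.1 i.rev, by
    have hbb : (fun i : Fin n => b.1 i.rev.rev) = b.1 := funext (fun i => by rw [Fin.rev_rev])
    apply (rev_cond (fun i => b.1 i.rev)).mpr
    rw [show (fun i : Fin n => b.1 i.rev.rev) = b.1 from hbb]
    exact b.2.2⟩
  left_inv a := Subtype.ext (funext (fun i => by simp only [Fin.rev_rev]))
  right_inv b := Subtype.ext (funext (fun i => by simp only [Fin.rev_rev]))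

noncomputable def E3 (hk : 1 ≤ k) (hkn : k ≤ n) :
    {a : Fin n → ℕ // (∀ i, ¬ k ≤ a i) ∧ k ≤ sc (aseq a) n} ≃
    {a : Fin n → ℕ // IsNonskip n k a} where
  toFun a := ⟨a.1, (nonskip_iff hk hkn a.1).mpr a.2⟩
  invFun a := ⟨a.1, (nonskip_iff hk hkn a.1).mp a.2⟩
  left_inv a := Subtype.ext rfl
  right_inv a := Subtype.ext rfl

lemma opCoinv_eq_sum (hkn : k ≤ n) (f : Fin n → Fin k) (hf : Function.Surjective f) :
    opCoinv n k f = ∑ i : Fin n, code f i := by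
  have h := sum_code_add_inv f hf hkn
  rw [opCoinv]
  omega

end HRS

open HRS

theorem stmt4 (n k : ℕ) (hk : 1 ≤ k) (hkn : k ≤ n) :
    (∃ Ψ : {f : Fin n → Fin k // Function.Surjective f} ≃
        {a : Fin n → ℕ // IsNonskip n k a},
      ∀ f : {f : Fin n → Fin k // Function.Surjective f},
        opCoinv n k f.1 = ∑ i : Fin n, (Ψ f).1 i) ∧
    Nat.card {a : Fin n → ℕ // IsNonskip n k a}
      = Nat.card {f : Fin n → Fin k // Function.Surjective f} ∧
    ∀ d : ℕ,
      Nat.card {a : Fin n → ℕ // IsNonskip n k a ∧ ∑ i : Fin n, a i = d}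
        = Nat.card {f : Fin n → Fin k // Function.Surjective f ∧ opCoinv n k f = d} := by
  set Ψ : {f : Fin n → Fin k // Function.Surjective f} ≃
      {a : Fin n → ℕ // IsNonskip n k a} :=
    (E1 hk).trans (E2.trans (E3 hk hkn)) with hΨdef
  have hΨ : ∀ f : {f : Fin n → Fin k // Function.Surjective f},
      opCoinv n k f.1 = ∑ i : Fin n, (Ψ f).1 i := by
    intro f
    have hval : (Ψ f).1 = fun i : Fin n => code f.1 i.rev := rfl
    rw [hval]
    have hsum : ∑ i : Fin n, code f.1 i.rev = ∑ i : Fin n, code f.1 i := by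
      have := Equiv.sum_comp (Fin.revPerm : Fin n ≃ Fin n) (code f.1)
      simpa using this
    rw [hsum]
    exact opCoinv_eq_sum hkn f.1 f.2
  refine ⟨⟨Ψ, hΨ⟩, Nat.card_congr Ψ.symm, ?_⟩
  intro d
  apply Nat.card_congr
  refine
    { toFun := fun a => ⟨(Ψ.symm ⟨a.1, a.2.1⟩).1, (Ψ.symm ⟨a.1, a.2.1⟩).2, ?_⟩
      invFun := fun f => ⟨(Ψ ⟨f.1, f.2.1⟩).1, (Ψ ⟨f.1, f.2.1⟩).2, ?_⟩
      left_inv := ?_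
      right_inv := ?_ }
  · have h := hΨ (Ψ.symm ⟨a.1, a.2.1⟩)
    rw [h, Equiv.apply_symm_apply]
    exact a.2.2
  · rw [← hΨ ⟨f.1, f.2.1⟩]
    exact f.2.2
  · intro a
    apply Subtype.ext
    show (Ψ (Ψ.symm ⟨a.1, a.2.1⟩)).1 = a.1
    rw [Equiv.apply_symm_apply]
  · intro f
    apply Subtype.ext
    show (Ψ.symm (Ψ ⟨f.1, f.2.1⟩)).1 = f.1
    rw [Equiv.symm_apply_apply]
end

section
/- Let k ≤ n be positive integers. Then I_{n,k} ⊆ T(Y_{n,k}). -/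
open MvPolynomial

/-- The ideal `I_{n,k} ⊆ ℚ[x_1, …, x_n]` generated by `x_1^k, …, x_n^k` together with
the elementary symmetric polynomials `e_d(x_1, …, x_n)` for `n−k+1 ≤ d ≤ n`. -/
noncomputable def Ink (n k : ℕ) : Ideal (MvPolynomial (Fin n) ℚ) :=
  Ideal.span ({p | ∃ i : Fin n, p = X i ^ k} ∪
    {p | ∃ d : ℕ, n - k + 1 ≤ d ∧ d ≤ n ∧ p = esymm (Fin n) ℚ d})

/-- `T(Y_{n,k})`: the ideal generated by top-degree homogeneous components `τ(f)` of the
nonzero polynomials `f` vanishing on the set `Y_{n,k}` of points `y ∈ ℚ^n` whose set of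
coordinates is exactly `{α_1, …, α_k}`. -/
noncomputable def topIdeal (n k : ℕ) (α : Fin k → ℚ) : Ideal (MvPolynomial (Fin n) ℚ) :=
  Ideal.span {g | ∃ f : MvPolynomial (Fin n) ℚ, f ≠ 0 ∧
    (∀ y : Fin n → ℚ, Set.range y = Set.range α → eval y f = 0) ∧
    g = homogeneousComponent f.totalDegree f}
/-!
Both kinds of generators are top components of explicit polynomials vanishing on `Y_{n,k}`.
Since every coordinate of a point of `Y_{n,k}` is some `α_j`, the univariate polynomial
`∏_j (x_i - α_j)` vanishes there, with top component `x_i^k`. Since every `α_j` occurs as a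
coordinate, so does `∏_i (x_i - α_j) = ∑_m (-α_j)^(n-m) e_m` for each `j`. Inverting the
Vandermonde matrix of the `-α_j` gives a combination of these products in which the coefficient
of `e_m` is `δ_{m,d}` for all `m > n - k`, so for `d > n - k` its top component is `e_d`.
-/

open Finset

namespace MvPolynomial

variable {σ R : Type*} [CommSemiring R]

theorem homogeneousComponent_finsetSum_of_isHomogeneous {s : Finset ℕ}
    {g : ℕ → MvPolynomial σ R} (hg : ∀ m ∈ s, (g m).IsHomogeneous m) {d : ℕ} (hd : d ∈ s) :
    homogeneousComponent d (∑ m ∈ s, g m) = g d := by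
  rw [map_sum, sum_eq_single_of_mem d hd]
  · exact (homogeneousComponent_of_mem (hg d hd)).trans (if_pos rfl)
  · intro m hm hmd
    rw [homogeneousComponent_of_mem (hg m hm), if_neg (Ne.symm hmd)]

theorem totalDegree_finsetSum_le_of_isHomogeneous {s : Finset ℕ}
    {g : ℕ → MvPolynomial σ R} (hg : ∀ m ∈ s, (g m).IsHomogeneous m) {d : ℕ}
    (hzero : ∀ m ∈ s, d < m → g m = 0) : (∑ m ∈ s, g m).totalDegree ≤ d :=
  totalDegree_finsetSum_le fun m hm => by
    rcases le_or_gt m d with hmd | hdm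
    · exact (hg m hm).totalDegree_le.trans hmd
    · simp [hzero m hm hdm]

theorem isHomogeneous_esymm [Fintype σ] (n : ℕ) : (esymm σ R n).IsHomogeneous n :=
  IsHomogeneous.sum _ _ _ fun t ht => by
    simpa [(mem_powersetCard.1 ht).2] using
      IsHomogeneous.prod t _ (fun _ => 1) fun i _ => isHomogeneous_X R i

theorem prod_C_add_X_eq_sum_C_pow_mul_esymm [Fintype σ] (r : R) :
    ∏ i : σ, (C r + X i) =
      ∑ j ∈ range (Fintype.card σ + 1), C (r ^ (Fintype.card σ - j)) * esymm σ R j := by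
  have := congrArg (Polynomial.eval (C r)) (prod_C_add_X_eq_sum_esymm R σ)
  rw [Polynomial.eval_prod, Polynomial.eval_finsetSum] at this
  simp only [Polynomial.eval_add, Polynomial.eval_X, Polynomial.eval_C, Polynomial.eval_mul,
    Polynomial.eval_pow] at this
  simpa [add_comm, mul_comm] using this

theorem aeval_X_eq_sum_C_mul_X_pow (p : Polynomial R) (i : σ) :
    Polynomial.aeval (X i : MvPolynomial σ R) p =
      ∑ m ∈ range (p.natDegree + 1), C (p.coeff m) * X i ^ m := by
  simp [Polynomial.aeval_eq_sum_range, smul_eq_C_mul]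

end MvPolynomial

open Matrix in
theorem exists_sum_mul_pow_eq_of_injective {K : Type*} [Field K] {k : ℕ} {β : Fin k → K}
    (hβ : Function.Injective β) (v : Fin k → K) :
    ∃ c : Fin k → K, ∀ m : Fin k, ∑ j, c j * β j ^ (m : ℕ) = v m := by
  have hV : IsUnit (vandermonde β).det :=
    isUnit_iff_ne_zero.2 (det_vandermonde_ne_zero_iff.2 hβ)
  refine ⟨v ᵥ* (vandermonde β)⁻¹, fun m => ?_⟩
  have : v ᵥ* (vandermonde β)⁻¹ ᵥ* vandermonde β = v := by
    rw [vecMul_vecMul, nonsing_inv_mul _ hV, vecMul_one]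
  simpa [vecMul, dotProduct] using congrFun this m

section topIdeal

variable {n k : ℕ} {α : Fin k → ℚ}

theorem homogeneousComponent_mem_topIdeal {f : MvPolynomial (Fin n) ℚ} {D : ℕ}
    (hf : ∀ y : Fin n → ℚ, Set.range y = Set.range α → eval y f = 0)
    (hD : f.totalDegree ≤ D) : homogeneousComponent D f ∈ topIdeal n k α := by
  by_cases h : homogeneousComponent D f = 0
  · rw [h]
    exact zero_mem _
  have hfD : f.totalDegree = D :=
    hD.antisymm (not_lt.1 fun hlt => h (homogeneousComponent_eq_zero D f hlt))
  have hf0 : f ≠ 0 := by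
    rintro rfl
    exact h (map_zero _)
  exact Ideal.subset_span ⟨f, hf0, hf, by rw [hfD]⟩

theorem mem_topIdeal_of_sum_isHomogeneous {s : Finset ℕ}
    {g : ℕ → MvPolynomial (Fin n) ℚ} (hg : ∀ m ∈ s, (g m).IsHomogeneous m) {d : ℕ}
    (hd : d ∈ s) (hzero : ∀ m ∈ s, d < m → g m = 0)
    (hf : ∀ y : Fin n → ℚ, Set.range y = Set.range α → eval y (∑ m ∈ s, g m) = 0) :
    g d ∈ topIdeal n k α := by
  rw [← homogeneousComponent_finsetSum_of_isHomogeneous hg hd]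
  exact homogeneousComponent_mem_topIdeal hf (totalDegree_finsetSum_le_of_isHomogeneous hg hzero)

theorem X_pow_mem_topIdeal (i : Fin n) : X i ^ k ∈ topIdeal n k α := by
  set q : Polynomial ℚ := ∏ j, (Polynomial.X - Polynomial.C (α j))
  have hq : q.natDegree = k := by simp [q]
  have hq1 : q.coeff k = 1 := hq ▸ (Polynomial.monic_prod_X_sub_C α univ).coeff_natDegree
  have hvan : ∀ y : Fin n → ℚ, Set.range y = Set.range α →
      eval y (Polynomial.aeval (X i) q) = 0 := by
    intro y hy
    obtain ⟨j, hj⟩ : y i ∈ Set.range α := hy ▸ Set.mem_range_self i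
    simpa [q, map_prod] using prod_eq_zero (mem_univ j) (by simp [hj])
  rw [aeval_X_eq_sum_C_mul_X_pow, hq] at hvan
  have := mem_topIdeal_of_sum_isHomogeneous
    (fun m _ => (isHomogeneous_X_pow i m).C_mul (q.coeff m)) (self_mem_range_succ k)
    (fun m hm hkm => absurd (mem_range_succ_iff.1 hm) hkm.not_ge) hvan
  simpa [hq1] using this

theorem esymm_mem_topIdeal (hα : Function.Injective α) {d : ℕ} (hd : n - k < d) (hdn : d ≤ n) :
    esymm (Fin n) ℚ d ∈ topIdeal n k α := by
  obtain ⟨c, hc⟩ := exists_sum_mul_pow_eq_of_injective (neg_injective.comp hα)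
    (fun m => if (m : ℕ) = n - d then 1 else 0)
  set b : ℕ → ℚ := fun m => ∑ j, c j * (-α j) ^ (n - m)
  have hb : ∀ m ≤ n, n - k < m → b m = if m = d then 1 else 0 := fun m hmn hkm => by
    simpa [b, show n - m = n - d ↔ m = d by omega] using hc ⟨n - m, by omega⟩
  have hsum : ∑ j, C (c j) * ∏ i : Fin n, (C (-α j) + X i) =
      ∑ m ∈ range (n + 1), C (b m) * esymm (Fin n) ℚ m := by
    simp only [prod_C_add_X_eq_sum_C_pow_mul_esymm, Fintype.card_fin, mul_sum]
    rw [sum_comm]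
    simp [b, sum_mul, mul_assoc]
  have hvan : ∀ y : Fin n → ℚ, Set.range y = Set.range α →
      eval y (∑ j, C (c j) * ∏ i : Fin n, (C (-α j) + X i)) = 0 := by
    intro y hy
    refine (eval_sum _ _ _).trans (sum_eq_zero fun j _ => ?_)
    obtain ⟨i, hi⟩ : α j ∈ Set.range y := hy ▸ Set.mem_range_self j
    simp only [eval_mul, eval_prod]
    rw [prod_eq_zero (mem_univ i) (by simp [hi]), mul_zero]
  rw [hsum] at hvan
  have := mem_topIdeal_of_sum_isHomogeneous
    (fun m _ => (isHomogeneous_esymm m).C_mul (b m)) (mem_range_succ_iff.2 hdn)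
    (fun m hm hdm => by
      rw [hb m (mem_range_succ_iff.1 hm) (by omega), if_neg hdm.ne', map_zero, zero_mul])
    hvan
  rwa [hb d hdn hd, if_pos rfl, map_one, one_mul] at this

end topIdeal

theorem stmt7_general (n k : ℕ)
    (α : Fin k → ℚ) (hα : Function.Injective α) :
    Ink n k ≤ topIdeal n k α := by
  rw [Ink, Ideal.span_le]
  rintro p (⟨i, rfl⟩ | ⟨d, hd, hdn, rfl⟩)
  · exact X_pow_mem_topIdeal i
  · exact esymm_mem_topIdeal hα (by omega) hdn

theorem stmt7 (n k : ℕ) (hk : 1 ≤ k) (hkn : k ≤ n)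
    (α : Fin k → ℚ) (hα : Function.Injective α) :
    Ink n k ≤ topIdeal n k α :=
  stmt7_general n k α hα
end

section
/- Let k ≤ n be positive integers. A monomial x_1^{a_1} ⋯ x_n^{a_n} ∈ ℚ[x_1, …, x_n] is (n,k)-nonskip if and only if its exponent sequence (a_1, …, a_n) is componentwise ≤ some (n,k)-staircase; that is, A_{n,k} = M_{n,k}. -/
/-- `b : Fin n → ℕ` is an `(n,k)`-staircase: a shuffle of `(0, 1, …, k−1)` with `n−k`
copies of `k−1`; i.e. there are positions `p_1 < ⋯ < p_k` where `b` takes the values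
`0, 1, …, k−1` in order, and `b` equals `k−1` at all other positions. -/
def IsStaircase (n k : ℕ) (b : Fin n → ℕ) : Prop :=
  ∃ p : Fin k → Fin n, StrictMono p ∧ (∀ t : Fin k, b (p t) = (t : ℕ)) ∧
    ∀ i : Fin n, (∀ t : Fin k, p t ≠ i) → b i = k - 1

open Finset

/-- Greedy running rank: `rk a i` is the number of "chosen" positions among the
first `i` positions, where a position is chosen iff its exponent is at most the
running rank at that point. -/
def rk {n : ℕ} (a : Fin n → ℕ) : ℕ → ℕ
  | 0 => 0
  | i+1 => rk a i + if h : i < n then (if a ⟨i, h⟩ ≤ rk a i then 1 else 0) else 0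

lemma rk_mono {n : ℕ} (a : Fin n → ℕ) : Monotone (rk a) := by
  apply monotone_nat_of_le_succ
  intro i
  simp only [rk]
  omega

lemma rk_succ_cases {n : ℕ} (a : Fin n → ℕ) (i : ℕ) :
    rk a (i+1) = rk a i ∨
      ∃ h : i < n, a ⟨i, h⟩ ≤ rk a i ∧ rk a (i+1) = rk a i + 1 := by
  simp only [rk]
  split_ifs with h1 h2
  · exact Or.inr ⟨h1, h2, rfl⟩
  · simp
  · simp

lemma rk_succ_of_chosen {n : ℕ} (a : Fin n → ℕ) (i : Fin n) (h : a i ≤ rk a i.val) :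
    rk a (i.val + 1) = rk a i.val + 1 := by
  simp only [rk, dif_pos i.isLt]
  rw [if_pos]
  exact h

/-- `rk a i` counts the chosen positions with index `< i`. -/
lemma rk_eq_card {n : ℕ} (a : Fin n → ℕ) (i : ℕ) :
    rk a i = ((univ.filter (fun j : Fin n => a j ≤ rk a j.val)).filter
      (fun j => j.val < i)).card := by
  induction i with
  | zero => simp [rk]
  | succ i ih =>
    have hset : ((univ.filter (fun j : Fin n => a j ≤ rk a j.val)).filter
        (fun j => j.val < i + 1)) =
        ((univ.filter (fun j : Fin n => a j ≤ rk a j.val)).filter (fun j => j.val < i)) ∪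
        ((univ.filter (fun j : Fin n => a j ≤ rk a j.val)).filter (fun j => j.val = i)) := by
      rw [← filter_or]
      apply filter_congr
      intro j _
      constructor
      · intro h; omega
      · intro h; omega
    rw [hset, card_union_of_disjoint]
    · rw [← ih]
      by_cases h : i < n
      · have hfe : ((univ.filter (fun j : Fin n => a j ≤ rk a j.val)).filter
            (fun j => j.val = i)) =
            if a ⟨i, h⟩ ≤ rk a i then {(⟨i, h⟩ : Fin n)} else ∅ := by
          ext j
          split_ifs with hc
          · simp only [mem_filter, mem_univ, true_and, mem_singleton]
            constructor
            · rintro ⟨_, h2⟩; exact Fin.ext h2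
            · rintro rfl; exact ⟨hc, rfl⟩
          · simp only [mem_filter, mem_univ, true_and, notMem_empty, iff_false, not_and]
            intro hj hval
            apply hc
            have : j = ⟨i, h⟩ := Fin.ext hval
            rwa [this] at hj
        rw [hfe]
        simp only [rk, dif_pos h]
        split_ifs <;> simp
      · have hfe : ((univ.filter (fun j : Fin n => a j ≤ rk a j.val)).filter
            (fun j => j.val = i)) = ∅ := by
          ext j
          simp only [mem_filter, notMem_empty, iff_false, not_and]
          intro _ hval
          exact absurd (hval ▸ j.isLt) h
        rw [hfe, card_empty]
        simp only [rk, dif_neg h]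
    · rw [disjoint_left]
      intro j hj hj'
      simp only [mem_filter] at hj hj'
      omega

lemma card_filter_lt_univ {n : ℕ} (i : Fin n) :
    (univ.filter (fun j : Fin n => j < i)).card = i.val := by
  have h : univ.filter (fun j : Fin n => j < i) = Finset.Iio i := by
    ext j; simp
  rw [h, Fin.card_Iio]

/-- Backward direction: anything dominated by a staircase is nonskip. -/
lemma backward_dir {n k : ℕ} (hk : 1 ≤ k) (hkn : k ≤ n) (a b : Fin n → ℕ)
    (hst : IsStaircase n k b) (hab : ∀ i : Fin n, a i ≤ b i) : IsNonskip n k a := by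
  obtain ⟨p, hmono, hval, hrest⟩ := hst
  have hble : ∀ i, b i ≤ k - 1 := by
    intro i
    by_cases h : ∃ t, p t = i
    · obtain ⟨t, rfl⟩ := h
      rw [hval]
      have := t.isLt
      omega
    · push_neg at h
      rw [hrest i h]
  constructor
  · intro i hki
    have h1 := hab i
    have h2 := hble i
    omega
  · intro S hS hdvd
    have hTne : (univ.filter (fun t : Fin k => p t ∈ S)).Nonempty := by
      by_contra hne
      rw [not_nonempty_iff_eq_empty] at hne
      have hdisj : Disjoint (univ.image p) S := by
        rw [disjoint_left]
        rintro x hx hxS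
        simp only [mem_image, mem_univ, true_and] at hx
        obtain ⟨t, rfl⟩ := hx
        have ht : t ∈ univ.filter (fun t : Fin k => p t ∈ S) := by simp [hxS]
        rw [hne] at ht
        exact absurd ht (notMem_empty t)
      have h1 : (univ.image p).card = k := by
        rw [card_image_of_injective _ hmono.injective, card_univ, Fintype.card_fin]
      have h2 := card_union_of_disjoint hdisj
      have h3 : (univ.image p ∪ S).card ≤ n := by
        have := card_le_card (subset_univ (univ.image p ∪ S))
        simpa [card_univ] using this
      omega
    set t := (univ.filter (fun t : Fin k => p t ∈ S)).min' hTne with ht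
    have htS : p t ∈ S := by
      have := (univ.filter (fun t : Fin k => p t ∈ S)).min'_mem hTne
      rw [mem_filter] at this
      exact this.2
    have hmin : ∀ r : Fin k, r < t → p r ∉ S := by
      intro r hr hrS
      have : t ≤ r := min'_le _ r (by simp [hrS])
      exact absurd hr (not_lt.mpr this)
    have hcount : t.val + (S.filter (fun j => j < p t)).card ≤ (p t).val := by
      have hdisj : Disjoint ((univ.filter (fun r : Fin k => r < t)).image p)
          (S.filter (fun j => j < p t)) := by
        rw [disjoint_left]
        rintro x hx hxS
        simp only [mem_image, mem_filter, mem_univ, true_and] at hx hxS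
        obtain ⟨r, hr, rfl⟩ := hx
        exact hmin r hr hxS.1
      have hsub : ((univ.filter (fun r : Fin k => r < t)).image p ∪
          S.filter (fun j => j < p t)) ⊆ univ.filter (fun j : Fin n => j < p t) := by
        intro x hx
        simp only [mem_union, mem_image, mem_filter, mem_univ, true_and] at hx ⊢
        rcases hx with ⟨r, hr, rfl⟩ | ⟨_, hx⟩
        · exact hmono hr
        · exact hx
      have h1 : ((univ.filter (fun r : Fin k => r < t)).image p).card = t.val := by
        rw [card_image_of_injective _ hmono.injective, card_filter_lt_univ]
      have h2 := card_union_of_disjoint hdisj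
      have h3 := card_le_card hsub
      rw [card_filter_lt_univ] at h3
      omega
    have hexp := hdvd (p t)
    rw [skipExp, if_pos htS] at hexp
    have habi := hab (p t)
    rw [hval] at habi
    omega

/-- Case 1 of the forward direction: if the greedy algorithm selects at least `k`
positions, we can build a dominating staircase. -/
lemma case1 {n k : ℕ} (hk : 1 ≤ k) (hkn : k ≤ n) (a : Fin n → ℕ)
    (hbd : ∀ i : Fin n, ¬ (k ≤ a i)) (hR : k ≤ rk a n) :
    ∃ b : Fin n → ℕ, IsStaircase n k b ∧ ∀ i : Fin n, a i ≤ b i := by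
  have hex : ∀ t : Fin k, ∃ i, (t : ℕ) + 1 ≤ rk a i := by
    intro t
    exact ⟨n, by have := t.isLt; omega⟩
  set m : Fin k → ℕ := fun t => Nat.find (hex t) with hm
  have hm_spec : ∀ t : Fin k, (t : ℕ) + 1 ≤ rk a (m t) := fun t => Nat.find_spec (hex t)
  have hm_pos : ∀ t, 1 ≤ m t := by
    intro t
    by_contra h
    have h0 : m t = 0 := by omega
    have := hm_spec t
    rw [h0] at this
    simp [rk] at this
  have hm_le : ∀ t, m t ≤ n := by
    intro t
    exact Nat.find_le (by have := t.isLt; omega)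
  have hm_prev : ∀ t, rk a (m t - 1) ≤ (t : ℕ) := by
    intro t
    have hmt : m t = Nat.find (hex t) := rfl
    have := Nat.find_min (hex t) (m := m t - 1) (by rw [← hmt]; have := hm_pos t; omega)
    omega
  have hlt : ∀ t : Fin k, m t - 1 < n := by
    intro t
    have := hm_le t
    omega
  have hkey : ∀ t : Fin k, a ⟨m t - 1, hlt t⟩ ≤ (t : ℕ) ∧ rk a (m t - 1) = (t : ℕ) ∧
      rk a (m t) = (t : ℕ) + 1 := by
    intro t
    have hsucc : m t - 1 + 1 = m t := by have := hm_pos t; omega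
    rcases rk_succ_cases a (m t - 1) with h | ⟨h, hch, hstep⟩
    · rw [hsucc] at h
      have h1 := hm_spec t
      have h2 := hm_prev t
      omega
    · rw [hsucc] at hstep
      have h1 := hm_spec t
      have h2 := hm_prev t
      refine ⟨?_, by omega, by omega⟩
      have : rk a (m t - 1) = (t : ℕ) := by omega
      rw [← this]
      exact hch
  have hm_smono : ∀ t t' : Fin k, t < t' → m t < m t' := by
    intro t t' htt
    by_contra h
    have hle : rk a (m t') ≤ rk a (m t) := rk_mono a (by omega)
    have h1 := (hkey t).2.2
    have h2 := (hkey t').2.2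
    have : (t : ℕ) < (t' : ℕ) := htt
    omega
  refine ⟨fun i => if a i ≤ rk a i.val ∧ rk a i.val < k then rk a i.val else k - 1,
    ⟨fun t => ⟨m t - 1, hlt t⟩, ?_, ?_, ?_⟩, ?_⟩
  · intro t t' htt
    have := hm_smono t t' htt
    have := hm_pos t
    simp only [Fin.mk_lt_mk]
    omega
  · intro t
    obtain ⟨hch, hrk, -⟩ := hkey t
    simp only
    rw [if_pos]
    · exact hrk
    · refine ⟨?_, ?_⟩
      · rw [hrk]; exact hch
      · rw [hrk]; exact t.isLt
  · intro i hi
    simp only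
    rw [if_neg]
    intro ⟨hch, hrkk⟩
    set t : Fin k := ⟨rk a i.val, hrkk⟩ with htdef
    apply hi t
    have hstep := rk_succ_of_chosen a i hch
    have hmt : m t = Nat.find (hex t) := rfl
    have hub : m t ≤ (i : ℕ) + 1 := by
      rw [hmt]
      exact Nat.find_le (by simp only [htdef]; omega)
    have hlb : i.val < m t := by
      rw [hmt, Nat.lt_find_iff]
      intro j hj
      have : rk a j ≤ rk a i.val := rk_mono a hj
      simp only [htdef]
      omega
    have : m t = i.val + 1 := by omega
    apply Fin.ext
    simp only [this]
    omega
  · intro i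
    simp only
    split_ifs with h
    · exact h.1
    · have := hbd i
      omega

/-- Case 2 of the forward direction: if the greedy algorithm selects fewer than `k`
positions, a skip monomial divides the monomial. -/
lemma case2 {n k : ℕ} (hkn : k ≤ n) (a : Fin n → ℕ)
    (hR : rk a n < k) :
    ∃ S : Finset (Fin n), S.card = n - k + 1 ∧ skipDvd S a := by
  set Ch : Finset (Fin n) := univ.filter (fun j : Fin n => a j ≤ rk a j.val) with hCh
  have hChcard : Ch.card = rk a n := by
    rw [rk_eq_card a n]
    congr 1
    rw [filter_true_of_mem]
    intro j _
    exact j.isLt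
  set C : Finset (Fin n) := univ.filter (fun j : Fin n => ¬ a j ≤ rk a j.val) with hCdef
  have hCcard : C.card = n - rk a n := by
    have : C = univ \ Ch := by
      rw [hCdef, hCh, filter_not]
    rw [this, card_sdiff_of_subset (filter_subset _ _), card_univ, Fintype.card_fin, hChcard]
  have hm : n - k + 1 ≤ C.card := by omega
  set e := C.orderEmbOfFin rfl with he
  set S : Finset (Fin n) := univ.image (fun t : Fin (n - k + 1) => e (Fin.castLE hm t))
    with hSdef
  have hScard : S.card = n - k + 1 := by
    have hinj : Function.Injective (fun t : Fin (n - k + 1) => e (Fin.castLE hm t)) :=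
      fun x y h => Fin.castLE_injective hm (e.injective h)
    rw [hSdef, card_image_of_injective _ hinj, card_univ, Fintype.card_fin]
  have hSC : S ⊆ C := by
    intro x hx
    rw [hSdef] at hx
    simp only [mem_image, mem_univ, true_and] at hx
    obtain ⟨t, rfl⟩ := hx
    exact C.orderEmbOfFin_mem rfl _
  refine ⟨S, hScard, ?_⟩
  intro i
  rw [skipExp]
  split_ifs with hiS
  · have hiC : i ∈ C := hSC hiS
    have hnotch : ¬ a i ≤ rk a i.val := by
      rw [hCdef, mem_filter] at hiC
      exact hiC.2
    obtain ⟨t, -, hti⟩ : ∃ t : Fin (n - k + 1), t ∈ univ ∧ e (Fin.castLE hm t) = i := by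
      rw [hSdef] at hiS
      simpa using hiS
    have hsplit : univ.filter (fun j : Fin n => j < i) =
        S.filter (fun j => j < i) ∪ Ch.filter (fun j => j < i) := by
      ext j
      simp only [mem_union, mem_filter, mem_univ, true_and]
      constructor
      · intro hj
        by_cases hch : a j ≤ rk a j.val
        · exact Or.inr ⟨by rw [hCh]; simp [hch], hj⟩
        · left
          refine ⟨?_, hj⟩
          have hjC : j ∈ C := by
            rw [hCdef, mem_filter]
            exact ⟨mem_univ j, hch⟩
          have hjr : ∃ r : Fin C.card, e r = j := by
            have : (j : Fin n) ∈ Set.range e := by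
              rw [he, range_orderEmbOfFin]
              exact_mod_cast hjC
            simpa using this
          obtain ⟨r, rfl⟩ := hjr
          have hrt : r < Fin.castLE hm t := by
            rw [← hti] at hj
            exact e.lt_iff_lt.mp hj
          have hrval : (r : ℕ) < n - k + 1 := by
            have h1 : (r : ℕ) < (t : ℕ) := hrt
            have := t.isLt
            omega
          rw [hSdef]
          simp only [mem_image, mem_univ, true_and]
          refine ⟨⟨(r : ℕ), hrval⟩, ?_⟩
          have hcast : Fin.castLE hm ⟨(r : ℕ), hrval⟩ = r := by
            apply Fin.ext
            simp
          rw [hcast]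
      · rintro (⟨-, hj⟩ | ⟨-, hj⟩) <;> exact hj
    have hdisj : Disjoint (S.filter (fun j => j < i)) (Ch.filter (fun j => j < i)) := by
      rw [disjoint_left]
      intro x hx hx'
      rw [mem_filter] at hx hx'
      have h1 := hSC hx.1
      rw [hCdef, mem_filter] at h1
      rw [hCh, mem_filter] at hx'
      exact h1.2 hx'.1.2
    have hcount : i.val = (S.filter (fun j => j < i)).card + rk a i.val := by
      have h1 := card_filter_lt_univ i
      rw [hsplit, card_union_of_disjoint hdisj] at h1
      have h2 : (Ch.filter (fun j => j < i)).card = rk a i.val := by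
        rw [rk_eq_card a i.val]
        rfl
      omega
    omega
  · exact Nat.zero_le _

theorem stmt10 (n k : ℕ) (hk : 1 ≤ k) (hkn : k ≤ n) (a : Fin n → ℕ) :
    IsNonskip n k a ↔
      ∃ b : Fin n → ℕ, IsStaircase n k b ∧ ∀ i : Fin n, a i ≤ b i := by
  constructor
  · rintro ⟨hbd, hS⟩
    by_cases hR : k ≤ rk a n
    · exact case1 hk hkn a hbd hR
    · obtain ⟨S, hSc, hdvd⟩ := case2 hkn a (by omega)
      exact absurd hdvd (hS S hSc)
  · rintro ⟨b, hst, hab⟩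
    exact backward_dir hk hkn a b hst hab
end

section
/- Let k ≤ n be positive integers. Then, as polynomials in q, the sum of q^{comaj(π,S)} over all pairs (π, S) with π ∈ S_n, S ⊆ Asc(π) and |S| = n−k equals ∑_{π ∈ S_n} q^{maj(π)} · [asc(π) choose n−k]_q. -/
/-- The descent set of `π ∈ S_n` (0-based positions `i`, representing the 1-based
descent position `i+1`): positions with `π_i > π_{i+1}`. -/
def desSet {n : ℕ} (π : Equiv.Perm (Fin n)) : Finset (Fin n) :=
  Finset.univ.filter (fun i => ∃ j : Fin n, (j : ℕ) = (i : ℕ) + 1 ∧ π j < π i)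

/-- The ascent set of `π ∈ S_n` (0-based positions). -/
def ascSet {n : ℕ} (π : Equiv.Perm (Fin n)) : Finset (Fin n) :=
  Finset.univ.filter (fun i => ∃ j : Fin n, (j : ℕ) = (i : ℕ) + 1 ∧ π i < π j)

/-- The major index `maj(π) = ∑_{i ∈ Des(π)} i` (1-based descent values). -/
def majStat {n : ℕ} (π : Equiv.Perm (Fin n)) : ℕ :=
  ∑ i ∈ desSet π, ((i : ℕ) + 1)

/-- `maj(π,S) = maj(π^c) − ∑_{i ∈ S} |Asc(π) ∩ {i, …, n−1}|` for an ascent-starred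
permutation `(π,S)`, where `π^c` is the complement `π^c_i = n − π_i + 1`. -/
def majOSP {n : ℕ} (π : Equiv.Perm (Fin n)) (S : Finset (Fin n)) : ℤ :=
  (majStat (π.trans Fin.revPerm) : ℤ) -
    ∑ i ∈ S, (((ascSet π).filter (fun j => i ≤ j)).card : ℤ)

/-- `comaj(π,S) = (n−k)(k−1) + k(k−1)/2 − maj(π,S)`. -/
def comajOSP (n k : ℕ) {m : ℕ} (π : Equiv.Perm (Fin m)) (S : Finset (Fin m)) : ℤ :=
  ((n : ℤ) - k) * ((k : ℤ) - 1) + (k : ℤ) * ((k : ℤ) - 1) / 2 - majOSP π S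

/-- The `q`-integer `[m]_q = 1 + q + ⋯ + q^{m−1}` in `ℚ(q)`. -/
noncomputable def qInt (m : ℕ) : RatFunc ℚ :=
  ∑ i ∈ Finset.range m, RatFunc.X ^ i

/-- The `q`-factorial `[m]!_q` in `ℚ(q)`. -/
noncomputable def qFact (m : ℕ) : RatFunc ℚ :=
  ∏ i ∈ Finset.range m, qInt (i + 1)

/-- The `q`-binomial coefficient `[a choose b]_q = [a]!_q/([b]!_q [a−b]!_q)`,
with the convention that it is `0` when `b > a`. -/
noncomputable def qBinom (a b : ℕ) : RatFunc ℚ :=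
  if b ≤ a then qFact a / (qFact b * qFact (a - b)) else 0

section
open Finset

lemma qInt_ne_zero {m : ℕ} (hm : 1 ≤ m) : qInt m ≠ 0 := by
  have : qInt m = algebraMap (Polynomial ℚ) (RatFunc ℚ)
      (∑ i ∈ Finset.range m, Polynomial.X ^ i) := by
    simp [qInt, map_sum, map_pow, RatFunc.algebraMap_X]
  rw [this]
  apply RatFunc.algebraMap_ne_zero
  intro h
  have h2 := congrArg (Polynomial.eval 1) h
  simp [Polynomial.eval_finset_sum] at h2
  omega

lemma qFact_ne_zero (m : ℕ) : qFact m ≠ 0 := by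
  apply Finset.prod_ne_zero_iff.2
  intro i _
  exact qInt_ne_zero (Nat.le_add_left 1 i)

lemma qInt_add (s t : ℕ) : qInt (s + t) = qInt s + RatFunc.X ^ s * qInt t := by
  simp [qInt, Finset.sum_range_add, Finset.mul_sum, pow_add]

lemma qFact_succ (m : ℕ) : qFact (m + 1) = qFact m * qInt (m + 1) := by
  simp [qFact, Finset.prod_range_succ]

lemma qFact_zero : qFact 0 = 1 := by simp [qFact]

lemma qBinom_self (a : ℕ) : qBinom a a = 1 := by
  rw [qBinom, if_pos le_rfl, Nat.sub_self, qFact_zero, mul_one, div_self (qFact_ne_zero a)]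

lemma qBinom_zero (a : ℕ) : qBinom a 0 = 1 := by
  rw [qBinom, if_pos (Nat.zero_le a), Nat.sub_zero, qFact_zero, one_mul,
    div_self (qFact_ne_zero a)]

lemma qBinom_of_gt {a b : ℕ} (h : a < b) : qBinom a b = 0 := by
  simp [qBinom, Nat.not_le.2 h]

lemma pascal (e b : ℕ) :
    qBinom (e + 1 + b) (e + 1) = qBinom (e + b) (e + 1) + RatFunc.X ^ b * qBinom (e + b) e := by
  rcases Nat.eq_zero_or_pos b with rfl | hb
  · simp [qBinom_self, qBinom_of_gt (Nat.lt_succ_self e)]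
  · obtain ⟨c, rfl⟩ : ∃ c, b = c + 1 := ⟨b - 1, by omega⟩
    have h1 : e + 1 ≤ e + 1 + (c + 1) := by omega
    have h2 : e + 1 ≤ e + (c + 1) := by omega
    have h3 : e ≤ e + (c + 1) := by omega
    rw [qBinom, if_pos h1, qBinom, if_pos h2, qBinom, if_pos h3]
    have e1 : e + 1 + (c + 1) - (e + 1) = c + 1 := by omega
    have e2 : e + (c + 1) - (e + 1) = c := by omega
    have e3 : e + (c + 1) - e = c + 1 := by omega
    rw [e1, e2, e3]
    have hs : e + 1 + (c + 1) = (e + (c + 1)) + 1 := by omega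
    rw [hs, qFact_succ (e + (c+1))]
    have hq : qInt (e + (c + 1) + 1) = qInt (c + 1) + RatFunc.X ^ (c + 1) * qInt (e + 1) := by
      have : e + (c + 1) + 1 = (c + 1) + (e + 1) := by omega
      rw [this, qInt_add]
    rw [hq, qFact_succ e, qFact_succ c]
    have n1 : qInt (e + 1) ≠ 0 := qInt_ne_zero (by omega)
    have n2 : qInt (c + 1) ≠ 0 := qInt_ne_zero (by omega)
    have n3 : qFact e ≠ 0 := qFact_ne_zero e
    have n4 : qFact c ≠ 0 := qFact_ne_zero c
    have n5 : qFact (e + (c + 1)) ≠ 0 := qFact_ne_zero _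
    field_simp

lemma tri (d : ℕ) : (d + 1) * (d + 2) / 2 = d * (d + 1) / 2 + (d + 1) := by
  obtain ⟨y, hy⟩ := Nat.even_mul_succ_self d
  have h : (d + 1) * (d + 2) = y + y + 2 * (d + 1) := by
    calc (d + 1) * (d + 2) = d * (d + 1) + 2 * (d + 1) := by ring
    _ = y + y + 2 * (d + 1) := by rw [hy]
  rw [h, hy]
  omega

lemma key {n : ℕ} (A : Finset (Fin n)) (d : ℕ) :
    ∑ S ∈ A.powersetCard d,
        (RatFunc.X : RatFunc ℚ) ^ (∑ i ∈ S, (A.filter (fun j => i ≤ j)).card)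
      = RatFunc.X ^ (d * (d + 1) / 2) * qBinom A.card d := by
  induction A using Finset.strongInduction generalizing d with
  | _ A ih =>
    match d with
    | 0 => simp [qBinom_zero]
    | d + 1 =>
      rcases A.eq_empty_or_nonempty with rfl | hA
      · simp [qBinom_of_gt (Nat.succ_pos d)]
      · set m := A.min' hA with hm_def
        have hm : m ∈ A := A.min'_mem hA
        set A' := A.erase m with hA'_def
        have hmA' : m ∉ A' := Finset.notMem_erase m A
        have hins : insert m A' = A := Finset.insert_erase hm
        have hss : A' ⊂ A := Finset.erase_ssubset hm
        have hcard : A.card = A'.card + 1 := by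
          rw [← hins, Finset.card_insert_of_notMem hmA']
        have w_eq : ∀ i ∈ A', (A.filter (fun j => i ≤ j)).card
            = (A'.filter (fun j => i ≤ j)).card := by
          intro i hi
          have hmi : m < i := Finset.min'_lt_of_mem_erase_min' A hA (by rwa [← hA'_def])
          rw [← hins, Finset.filter_insert, if_neg (by exact not_le.2 hmi)]
        have w_m : (A.filter (fun j => m ≤ j)).card = A.card := by
          rw [Finset.filter_true_of_mem (fun j hj => A.min'_le j hj)]
        rw [← hins, Finset.powersetCard_succ_insert hmA', Finset.sum_union]
        · have part1 : ∑ S ∈ A'.powersetCard (d + 1),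
              (RatFunc.X : RatFunc ℚ) ^ (∑ i ∈ S, ((insert m A').filter (fun j => i ≤ j)).card)
              = RatFunc.X ^ ((d+1) * (d + 2) / 2) * qBinom A'.card (d+1) := by
            rw [← ih A' hss (d+1)]
            apply Finset.sum_congr rfl
            intro S hS
            have hSsub : S ⊆ A' := (Finset.mem_powersetCard.1 hS).1
            congr 1
            apply Finset.sum_congr rfl
            intro i hi
            rw [hins]
            exact w_eq i (hSsub hi)
          have part2 : ∑ S ∈ (A'.powersetCard d).image (insert m),
              (RatFunc.X : RatFunc ℚ) ^ (∑ i ∈ S, ((insert m A').filter (fun j => i ≤ j)).card)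
              = RatFunc.X ^ (A'.card + 1) *
                  (RatFunc.X ^ (d * (d + 1) / 2) * qBinom A'.card d) := by
            rw [Finset.sum_image, ← ih A' hss d, Finset.mul_sum]
            · apply Finset.sum_congr rfl
              intro S hS
              have hSsub : S ⊆ A' := (Finset.mem_powersetCard.1 hS).1
              have hmS : m ∉ S := fun h => hmA' (hSsub h)
              rw [Finset.sum_insert hmS, pow_add, hins]
              congr 1
              · rw [w_m, hcard]
              · congr 1
                apply Finset.sum_congr rfl
                intro i hi
                exact w_eq i (hSsub hi)
            · intro S hS T hT hST
              have hmS : m ∉ S := fun h => hmA' ((Finset.mem_powersetCard.1 hS).1 h)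
              have hmT : m ∉ T := fun h => hmA' ((Finset.mem_powersetCard.1 hT).1 h)
              rw [← Finset.erase_insert hmS, ← Finset.erase_insert hmT, hST]
          rw [part1, part2, hins, hcard]
          rcases Nat.lt_or_ge A'.card d with hlt | hge
          · rw [qBinom_of_gt hlt, qBinom_of_gt (by omega), qBinom_of_gt (by omega)]
            ring
          · obtain ⟨b, hb⟩ : ∃ b, A'.card = d + b := ⟨A'.card - d, by omega⟩
            have hp := pascal d b
            have hsw : ∀ D : ℕ, (RatFunc.X : RatFunc ℚ) ^ (d + 1 + b)
                  * (RatFunc.X ^ D * qBinom (d + b) d)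
                = RatFunc.X ^ (D + (d + 1)) * (RatFunc.X ^ b * qBinom (d + b) d) := by
              intro D
              rw [← mul_assoc, ← pow_add, ← mul_assoc, ← pow_add]
              congr 2
              omega
            have h2 : d + b + 1 = d + 1 + b := by omega
            rw [hb, h2, hp, tri, mul_add, hsw]
            ring
        · rw [Finset.disjoint_left]
          intro S hS1 hS2
          obtain ⟨T, hT, rfl⟩ := Finset.mem_image.1 hS2
          exact hmA' ((Finset.mem_powersetCard.1 hS1).1 (Finset.mem_insert_self m T))

open Finset

lemma desSet_comp {n : ℕ} (π : Equiv.Perm (Fin n)) :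
    desSet (π.trans Fin.revPerm) = ascSet π := by
  ext i
  simp only [desSet, ascSet, Finset.mem_filter, Finset.mem_univ, true_and,
    Equiv.trans_apply, Fin.revPerm_apply, Fin.rev_lt_rev]

lemma desSet_disj_ascSet {n : ℕ} (π : Equiv.Perm (Fin n)) :
    Disjoint (desSet π) (ascSet π) := by
  rw [Finset.disjoint_left]
  intro i h1 h2
  simp only [desSet, ascSet, Finset.mem_filter, Finset.mem_univ, true_and] at h1 h2
  obtain ⟨j, hj, hlt⟩ := h1
  obtain ⟨j', hj', hlt'⟩ := h2
  have : j = j' := Fin.ext (by omega)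
  subst this
  exact absurd hlt' (lt_asymm hlt)

lemma desSet_union_ascSet {n : ℕ} (π : Equiv.Perm (Fin n)) :
    desSet π ∪ ascSet π = Finset.univ.filter (fun i : Fin n => (i : ℕ) + 1 < n) := by
  ext i
  simp only [desSet, ascSet, Finset.mem_union, Finset.mem_filter, Finset.mem_univ, true_and]
  constructor
  · rintro (⟨j, hj, _⟩ | ⟨j, hj, _⟩) <;> · have := j.isLt; omega
  · intro h
    set j : Fin n := ⟨(i : ℕ) + 1, h⟩ with hj
    have hne : π j ≠ π i := fun hh => by
      have h2 : j = i := π.injective hh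
      have h3 : (i : ℕ) + 1 = (i : ℕ) := by simpa [hj] using congrArg Fin.val h2
      omega
    rcases lt_or_gt_of_ne hne with hlt | hlt
    · exact Or.inl ⟨j, rfl, hlt⟩
    · exact Or.inr ⟨j, rfl, hlt⟩

lemma sum_if_eq (n : ℕ) :
    (∑ i ∈ Finset.range n, if i + 1 < n then i + 1 else 0) = ∑ i ∈ Finset.range n, i := by
  cases n with
  | zero => simp
  | succ m =>
    rw [Finset.sum_range_succ, Finset.sum_range_succ, if_neg (lt_irrefl _),
      Finset.sum_congr rfl (fun i hi => if_pos (by have := Finset.mem_range.1 hi; omega))]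
    simp [Finset.sum_add_distrib]

lemma maj_comp_sum {n : ℕ} (π : Equiv.Perm (Fin n)) :
    2 * (majStat π + ∑ i ∈ ascSet π, ((i : ℕ) + 1)) = n * (n - 1) := by
  rw [majStat, ← Finset.sum_union (desSet_disj_ascSet π), desSet_union_ascSet,
    Finset.sum_filter, Fin.sum_univ_eq_sum_range (fun i => if i + 1 < n then i + 1 else 0) n,
    sum_if_eq, mul_comm]
  exact Finset.sum_range_id_mul_two n

/-- The sum of `q^{comaj(π,S)}` over ascent-starred permutations `(π,S)` with `|S| = n−k`
equals `∑_{π ∈ S_n} q^{maj(π)} [asc(π) choose n−k]_q`. -/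
theorem stmt13 (n k : ℕ) (hk : 1 ≤ k) (hkn : k ≤ n) :
    ∑ π : Equiv.Perm (Fin n), ∑ S ∈ Finset.powersetCard (n - k) (ascSet π),
        (RatFunc.X : RatFunc ℚ) ^ (comajOSP n k π S)
      = ∑ π : Equiv.Perm (Fin n),
          (RatFunc.X : RatFunc ℚ) ^ (majStat π) * qBinom (ascSet π).card (n - k) := by
  have hn : 1 ≤ n := le_trans hk hkn
  have hXne : (RatFunc.X : RatFunc ℚ) ≠ 0 := RatFunc.X_ne_zero
  apply Finset.sum_congr rfl
  intro π _
  set d := n - k with hd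
  have hmaj : majStat (π.trans Fin.revPerm) = ∑ i ∈ ascSet π, ((i : ℕ) + 1) := by
    rw [majStat, desSet_comp]
  have h1 : 2 * (majStat π + ∑ i ∈ ascSet π, ((i : ℕ) + 1)) = n * (n - 1) := maj_comp_sum π
  zify [hn] at h1
  obtain ⟨e, he⟩ := Int.even_mul_succ_self ((k : ℤ) - 1)
  have hez : 2 * e = (k : ℤ) * ((k : ℤ) - 1) := by linear_combination -he
  have hediv : (k : ℤ) * ((k : ℤ) - 1) / 2 = e := by
    rw [← hez]; exact Int.mul_ediv_cancel_left e two_ne_zero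
  obtain ⟨f, hf⟩ := Nat.even_mul_succ_self d
  have hDf : d * (d + 1) / 2 = f := by rw [hf]; omega
  have hfz : 2 * (f : ℤ) = ((n : ℤ) - k) * (((n : ℤ) - k) + 1) := by
    have hdz : (d : ℤ) = (n : ℤ) - k := by rw [hd]; omega
    zify at hf
    rw [hdz] at hf
    linarith
  have hcomaj : ∀ S ∈ (ascSet π).powersetCard d, comajOSP n k π S =
      (majStat π : ℤ) + ((∑ i ∈ S, ((ascSet π).filter (fun j => i ≤ j)).card : ℕ) : ℤ)
        - ((d * (d + 1) / 2 : ℕ) : ℤ) := by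
    intro S _
    rw [comajOSP, majOSP, hmaj, hediv, hDf]
    push_cast
    apply mul_left_cancel₀ (a := (2 : ℤ)) two_ne_zero
    linear_combination hez + hfz - h1
  calc ∑ S ∈ (ascSet π).powersetCard d, (RatFunc.X : RatFunc ℚ) ^ comajOSP n k π S
      = ∑ S ∈ (ascSet π).powersetCard d,
          (RatFunc.X : RatFunc ℚ) ^ majStat π
            * RatFunc.X ^ (∑ i ∈ S, ((ascSet π).filter (fun j => i ≤ j)).card)
            / RatFunc.X ^ (d * (d + 1) / 2) := by
        apply Finset.sum_congr rfl
        intro S hS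
        rw [hcomaj S hS, zpow_sub₀ hXne, zpow_add₀ hXne, zpow_natCast, zpow_natCast,
          zpow_natCast]
    _ = (RatFunc.X : RatFunc ℚ) ^ majStat π
          * (∑ S ∈ (ascSet π).powersetCard d,
              (RatFunc.X : RatFunc ℚ) ^ (∑ i ∈ S, ((ascSet π).filter (fun j => i ≤ j)).card))
          / RatFunc.X ^ (d * (d + 1) / 2) := by
        rw [Finset.mul_sum, Finset.sum_div]
    _ = (RatFunc.X : RatFunc ℚ) ^ majStat π * qBinom (ascSet π).card d := by
        rw [key]
        have hp : (RatFunc.X : RatFunc ℚ) ^ (d * (d + 1) / 2) ≠ 0 := pow_ne_zero _ hXne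
        field_simp

end
end

section
/- Let s < k ≤ n be positive integers. Then for every 1 ≤ i ≤ n, the polynomial x_i^{k−1} · e_{n−s}(x_1, …, x_n) belongs to the ideal I_{n,k,s}. -/
open MvPolynomial Finset

noncomputable def Eaux (n : ℕ) (i : Fin n) (d : ℕ) : MvPolynomial (Fin n) ℚ :=
  ∑ t ∈ (Finset.univ.erase i).powersetCard d, ∏ j ∈ t, X j

lemma esymm_split (n : ℕ) (i : Fin n) (d : ℕ) :
    esymm (Fin n) ℚ (d + 1) = Eaux n i (d + 1) + X i * Eaux n i d := by
  have hi : i ∉ Finset.univ.erase i := Finset.notMem_erase i _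
  have huniv : (Finset.univ : Finset (Fin n)) = insert i (Finset.univ.erase i) :=
    (Finset.insert_erase (Finset.mem_univ i)).symm
  rw [esymm, huniv, Finset.powersetCard_succ_insert hi, Finset.sum_union, Finset.sum_image]
  · simp only [Eaux, Finset.mul_sum]
    congr 1
    refine Finset.sum_congr rfl fun t ht => ?_
    exact Finset.prod_insert fun h => hi ((Finset.mem_powersetCard.mp ht).1 h)
  · intro t ht u hu htu
    have hit : i ∉ t := fun h => hi ((Finset.mem_powersetCard.mp ht).1 h)
    have hiu : i ∉ u := fun h => hi ((Finset.mem_powersetCard.mp hu).1 h)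
    rw [← Finset.erase_insert hit, htu, Finset.erase_insert hiu]
  · rw [Finset.disjoint_left]
    rintro t ht hti
    obtain ⟨u, hu, rfl⟩ := Finset.mem_image.mp hti
    exact hi ((Finset.mem_powersetCard.mp ht).1 (Finset.mem_insert_self i u))

lemma Eaux_n (n : ℕ) (i : Fin n) : Eaux n i n = 0 := by
  rw [Eaux, Finset.powersetCard_eq_empty.mpr, Finset.sum_empty]
  rw [Finset.card_erase_of_mem (Finset.mem_univ i), Finset.card_univ, Fintype.card_fin]
  have := i.pos
  omega

noncomputable def Inks (n k s : ℕ) : Ideal (MvPolynomial (Fin n) ℚ) :=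
  Ideal.span ({p | ∃ i : Fin n, p = X i ^ k} ∪
    {p | ∃ d : ℕ, n - s + 1 ≤ d ∧ d ≤ n ∧ p = esymm (Fin n) ℚ d})

theorem stmt19 (n k s : ℕ) (hs : 1 ≤ s) (hsk : s < k) (hkn : k ≤ n) (i : Fin n) :
    X i ^ (k - 1) * esymm (Fin n) ℚ (n - s) ∈ Inks n k s := by
  have hXk : (X i : MvPolynomial (Fin n) ℚ) ^ k ∈ Inks n k s :=
    Ideal.subset_span (Or.inl ⟨i, rfl⟩)
  have hes : ∀ d, n - s + 1 ≤ d → d ≤ n → esymm (Fin n) ℚ d ∈ Inks n k s :=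
    fun d h1 h2 => Ideal.subset_span (Or.inr ⟨d, h1, h2, rfl⟩)
  -- induction claim
  have key : ∀ j, j ≤ s →
      X i ^ j * Eaux n i (n - s) - (-1 : MvPolynomial (Fin n) ℚ) ^ j * Eaux n i (n - s + j)
        ∈ Inks n k s := by
    intro j
    induction j with
    | zero => intro _; simp
    | succ j ih =>
      intro hj
      have hj' : j ≤ s := Nat.le_of_succ_le hj
      have h1 := ih hj'
      have h2 : esymm (Fin n) ℚ (n - s + j + 1) ∈ Inks n k s :=
        hes _ (by omega) (by omega)
      rw [esymm_split n i (n - s + j)] at h2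
      have : X i ^ (j + 1) * Eaux n i (n - s)
          - (-1 : MvPolynomial (Fin n) ℚ) ^ (j + 1) * Eaux n i (n - s + (j + 1))
          = X i * (X i ^ j * Eaux n i (n - s) - (-1) ^ j * Eaux n i (n - s + j))
            + (-1 : MvPolynomial (Fin n) ℚ) ^ j *
              (Eaux n i (n - s + j + 1) + X i * Eaux n i (n - s + j)) := by
        have : n - s + (j + 1) = n - s + j + 1 := by omega
        rw [this]; ring
      rw [this]
      exact Ideal.add_mem _ (Ideal.mul_mem_left _ _ h1) (Ideal.mul_mem_left _ _ h2)
  have hsfinal : X i ^ s * Eaux n i (n - s) ∈ Inks n k s := by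
    have := key s le_rfl
    have hns : n - s + s = n := by omega
    rw [hns, Eaux_n, mul_zero, sub_zero] at this
    exact this
  have hns1 : n - s = (n - s - 1) + 1 := by omega
  rw [hns1, esymm_split n i (n - s - 1), mul_add]
  refine Ideal.add_mem _ ?_ ?_
  · have hexp : k - 1 - s + s = k - 1 := by omega
    have : X i ^ (k - 1) * Eaux n i (n - s - 1 + 1)
        = X i ^ (k - 1 - s) * (X i ^ s * Eaux n i (n - s)) := by
      rw [← hns1, ← mul_assoc, ← pow_add, hexp]
    rw [this]
    exact Ideal.mul_mem_left _ _ hsfinal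
  · have hexp : k - 1 + 1 = k := by omega
    have : X i ^ (k - 1) * (X i * Eaux n i (n - s - 1))
        = X i ^ k * Eaux n i (n - s - 1) := by
      rw [← mul_assoc, ← pow_succ, hexp]
    rw [this]
    exact Ideal.mul_mem_right _ _ hXk
end
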